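/- arXiv:0912.2641 — 5 statements merged into one kernel-verified Lean document; each statement's English description precedes it below -/
import Mathlib

section
/- Let (v_n)_{n∈ℕ} be a bounded sequence of vectors in a real (or complex) Hilbert space H, and let (b_h)_{h∈ℕ} be a sequence of nonnegative reals such that: for every h ∈ ℕ and every sequence of intervals ([M_j, N_j))_{j∈ℕ} with N_j − M_j → ∞, one has limsup_{j→∞} | (1/(N_j − M_j)) Σ_{n=M_j}^{N_j−1} ⟨v_{n+h}, v_n⟩ | ≤ b_h. Suppose that lim_{H→∞} (1/H) Σ_{h=1}^{H} b_h = 0. Then for every sequence of intervals ([M_j, N_j))_{j∈ℕ} with N_j − M_j → ∞, the norms ‖ (1/(N_j − M_j)) Σ_{n=M_j}^{N_j−1} v_n ‖ converge to 0 as j → ∞. -/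
/-!
Van der Corput's trick. Fix a window length `K` and put `w n = ∑_{h < K} v (n + h)`. Up to
boundary terms of size `2 K² C`, `K • ∑_{n ∈ [M, N)} v n` equals `∑_{n ∈ [M, N)} w n`, and by
Cauchy–Schwarz `‖∑ w n‖² ≤ L ∑ ‖w n‖² = L ∑_{h, h' < K} Re ∑_n ⟪v (n + h), v (n + h')⟫`
with `L = N - M`. Each inner sum is a correlation sum of lag `|h - h'|` over a shifted interval of
length `L`; once `L` is large it is at most `L (b |h - h'| + ε)` uniformly in the interval, since
otherwise a sequence of bad intervals would contradict the `limsup` hypothesis. Altogether the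
average over `[M, N)` has norm at most `2 K C / L + √(ε + (b 0 + 2 ∑_{d = 1}^{K} b d) / K)`, and
the Cesàro hypothesis on `b` makes the square root small for a suitable `K`.
-/

open Filter Topology Finset

section NormedGroup

variable {E : Type*} {v : ℕ → E} {C : ℝ}

lemma norm_sum_Ico_shift_sub_le [SeminormedAddCommGroup E] (hC : ∀ n, ‖v n‖ ≤ C)
    {M N : ℕ} (hMN : M ≤ N) (h : ℕ) :
    ‖∑ n ∈ Ico M N, v (n + h) - ∑ n ∈ Ico M N, v n‖ ≤ 2 * h * C := by
  induction h with
  | zero => simp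
  | succ h ih =>
    have telescope : ∑ n ∈ Ico M N, v (n + (h + 1)) - ∑ n ∈ Ico M N, v (n + h)
        = v (N + h) - v (M + h) := by
      rw [← sum_sub_distrib, ← sum_Ico_sub (fun n => v (n + h)) hMN]
      simp only [add_right_comm _ 1 h, add_assoc]
    calc _ = ‖(v (N + h) - v (M + h)) + (∑ n ∈ Ico M N, v (n + h) - ∑ n ∈ Ico M N, v n)‖ := by
          rw [← telescope, sub_add_sub_cancel]
      _ ≤ (C + C) + 2 * h * C := (norm_add_le _ _).trans <|
          add_le_add ((norm_sub_le _ _).trans (add_le_add (hC _) (hC _))) ih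
      _ = 2 * ↑(h + 1) * C := by push_cast; ring

lemma mul_norm_sum_Ico_le (𝕜 : Type*) [RCLike 𝕜] [NormedAddCommGroup E] [NormedSpace 𝕜 E]
    (hC : ∀ n, ‖v n‖ ≤ C) {M N : ℕ} (hMN : M ≤ N) (K : ℕ) :
    K * ‖∑ n ∈ Ico M N, v n‖ ≤ ‖∑ n ∈ Ico M N, ∑ h ∈ range K, v (n + h)‖ + 2 * K ^ 2 * C := by
  set u := ∑ n ∈ Ico M N, v n
  have hC0 : 0 ≤ C := (norm_nonneg _).trans (hC 0)
  have hdiff : ‖K • u - ∑ n ∈ Ico M N, ∑ h ∈ range K, v (n + h)‖ ≤ 2 * K ^ 2 * C := by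
    have hu : K • u = ∑ _h ∈ range K, u := by rw [sum_const, card_range]
    rw [hu, sum_comm (s := Ico M N), ← sum_sub_distrib]
    calc _ ≤ ∑ h ∈ range K, ‖u - ∑ n ∈ Ico M N, v (n + h)‖ := norm_sum_le _ _
      _ ≤ ∑ _h ∈ range K, 2 * K * C := by
          refine sum_le_sum fun h hh => ?_
          rw [norm_sub_rev]
          refine (norm_sum_Ico_shift_sub_le hC hMN h).trans ?_
          gcongr
          exact_mod_cast (mem_range.1 hh).le
      _ = 2 * K ^ 2 * C := by rw [sum_const, card_range, nsmul_eq_mul]; ring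
  calc (K : ℝ) * ‖u‖ = ‖K • u‖ := by rw [RCLike.norm_nsmul 𝕜, nsmul_eq_mul]
    _ ≤ _ := (norm_le_norm_add_norm_sub' _ _).trans (by gcongr)

end NormedGroup

noncomputable def corrAvg (𝕜 : Type*) {E : Type*} [RCLike 𝕜] [NormedAddCommGroup E]
    [InnerProductSpace 𝕜 E] (v : ℕ → E) (d M N : ℕ) : ℝ :=
  ‖∑ n ∈ Ico M N, (inner 𝕜 (v (n + d)) (v n) : 𝕜)‖ / ((N - M : ℕ) : ℝ)

section InnerProduct

variable {𝕜 E : Type*} [RCLike 𝕜] [NormedAddCommGroup E] [InnerProductSpace 𝕜 E]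
  {v : ℕ → E} {C : ℝ}

lemma norm_sum_sum_sq_le {ι κ : Type*} (s : Finset ι) (t : Finset κ) (f : ι → κ → E)
    (c : κ → κ → ℝ)
    (hc : ∀ h ∈ t, ∀ h' ∈ t, ‖∑ n ∈ s, (inner 𝕜 (f n h) (f n h') : 𝕜)‖ ≤ c h h') :
    ‖∑ n ∈ s, ∑ h ∈ t, f n h‖ ^ 2 ≤ #s * ∑ h ∈ t, ∑ h' ∈ t, c h h' := by
  have hexpand : ∑ n ∈ s, ‖∑ h ∈ t, f n h‖ ^ 2
      = ∑ h ∈ t, ∑ h' ∈ t, RCLike.re (∑ n ∈ s, (inner 𝕜 (f n h) (f n h') : 𝕜)) := by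
    simp_rw [@norm_sq_eq_re_inner 𝕜, sum_inner, inner_sum, map_sum]
    rw [sum_comm (s := s)]
    exact sum_congr rfl fun _ _ => sum_comm
  calc ‖∑ n ∈ s, ∑ h ∈ t, f n h‖ ^ 2 ≤ (∑ n ∈ s, ‖∑ h ∈ t, f n h‖) ^ 2 := by
        gcongr; exact norm_sum_le _ _
    _ ≤ #s * ∑ n ∈ s, ‖∑ h ∈ t, f n h‖ ^ 2 := sq_sum_le_card_mul_sum_sq
    _ ≤ #s * ∑ h ∈ t, ∑ h' ∈ t, c h h' := by
        rw [hexpand]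
        gcongr with h hh h' hh'
        exact (RCLike.re_le_norm _).trans (hc h hh h' hh')

lemma norm_sum_Ico_inner_shift (v : ℕ → E) (M N h h' : ℕ) :
    ‖∑ n ∈ Ico M N, (inner 𝕜 (v (n + h)) (v (n + h')) : 𝕜)‖
      = ‖∑ n ∈ Ico (M + min h h') (N + min h h'), (inner 𝕜 (v (n + h.dist h')) (v n) : 𝕜)‖ := by
  wlog hle : h' ≤ h generalizing h h'
  · rw [min_comm, Nat.dist_comm, ← this h' h (le_of_not_ge hle), ← RCLike.norm_conj, map_sum]
    simp only [inner_conj_symm]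
  rw [min_eq_right hle, Nat.dist_eq_sub_of_le_right hle, ← sum_Ico_add']
  simp only [add_assoc, Nat.add_sub_cancel' hle]

lemma corrAvg_nonneg (d M N : ℕ) : 0 ≤ corrAvg 𝕜 v d M N := by
  unfold corrAvg; positivity

lemma corrAvg_le_sq (hC : ∀ n, ‖v n‖ ≤ C) (d M N : ℕ) : corrAvg 𝕜 v d M N ≤ C ^ 2 := by
  have hC0 : 0 ≤ C := (norm_nonneg _).trans (hC 0)
  unfold corrAvg
  rcases eq_or_ne (N - M) 0 with hL | hL
  · simp only [hL, CharP.cast_eq_zero, div_zero]; positivity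
  rw [div_le_iff₀ (by positivity)]
  calc ‖∑ n ∈ Ico M N, (inner 𝕜 (v (n + d)) (v n) : 𝕜)‖ ≤ ∑ _n ∈ Ico M N, C ^ 2 :=
        norm_sum_le_of_le _ fun n _ => norm_inner_le_norm _ _ |>.trans <| by
          rw [sq]; exact mul_le_mul (hC _) (hC _) (norm_nonneg _) hC0
    _ = C ^ 2 * (N - M : ℕ) := by rw [sum_const, Nat.card_Ico, nsmul_eq_mul, mul_comm]

lemma exists_forall_corrAvg_lt (hC : ∀ n, ‖v n‖ ≤ C) {d : ℕ} {β : ℝ}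
    (hβ : ∀ M N : ℕ → ℕ, Tendsto (fun j => N j - M j) atTop atTop →
      limsup (fun j => corrAvg 𝕜 v d (M j) (N j)) atTop ≤ β) {ε : ℝ} (hε : 0 < ε) :
    ∃ L₀, ∀ M N, L₀ ≤ N - M → corrAvg 𝕜 v d M N < β + ε := by
  by_contra! hcon
  choose M N hlen hlarge using hcon
  have hle := hβ M N (tendsto_atTop_mono hlen tendsto_id)
  have hge : β + ε ≤ limsup (fun j => corrAvg 𝕜 v d (M j) (N j)) atTop :=
    le_limsup_of_frequently_le (.of_forall hlarge)
      (isBoundedUnder_of ⟨C ^ 2, fun j => corrAvg_le_sq hC _ _ _⟩)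
  linarith

lemma nonneg_of_forall_limsup_corrAvg_le (hC : ∀ n, ‖v n‖ ≤ C) {d : ℕ} {β : ℝ}
    (hβ : ∀ M N : ℕ → ℕ, Tendsto (fun j => N j - M j) atTop atTop →
      limsup (fun j => corrAvg 𝕜 v d (M j) (N j)) atTop ≤ β) : 0 ≤ β :=
  le_of_forall_pos_lt_add fun _ hε =>
    let ⟨L₀, hL₀⟩ := exists_forall_corrAvg_lt hC hβ hε
    (corrAvg_nonneg _ _ _).trans_lt (hL₀ 0 L₀ le_rfl)

end InnerProduct

lemma sum_range_dist_le {b : ℕ → ℝ} (hb : ∀ d, 0 ≤ b d) {K h : ℕ} (hh : h < K) :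
    ∑ h' ∈ range K, b (h.dist h') ≤ b 0 + 2 * ∑ d ∈ Icc 1 K, b d := by
  have hS : ∑ d ∈ range (K + 1), b d = b 0 + ∑ d ∈ Icc 1 K, b d := by
    rw [range_eq_Ico, sum_eq_sum_Ico_succ_bot (by omega : 0 < K + 1), zero_add,
      Ico_add_one_right_eq_Icc]
  have hS' : ∑ k ∈ range K, b (k + 1) = ∑ d ∈ Icc 1 K, b d := by
    linarith [sum_range_succ' b K]
  have hlow : ∑ h' ∈ range (h + 1), b (h.dist h') ≤ b 0 + ∑ d ∈ Icc 1 K, b d := by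
    calc ∑ h' ∈ range (h + 1), b (h.dist h') = ∑ d ∈ range (h + 1), b d := by
          rw [← sum_range_reflect]
          refine sum_congr rfl fun d hd => ?_
          have := mem_range.1 hd
          rw [Nat.dist_eq_sub_of_le_right (by omega)]
          congr 1; omega
      _ ≤ ∑ d ∈ range (K + 1), b d :=
          sum_le_sum_of_subset_of_nonneg (range_subset_range.2 (by omega)) fun d _ _ => hb d
      _ = _ := hS
  have hhigh : ∑ h' ∈ Ico (h + 1) K, b (h.dist h') ≤ ∑ d ∈ Icc 1 K, b d := by
    calc ∑ h' ∈ Ico (h + 1) K, b (h.dist h') = ∑ k ∈ range (K - (h + 1)), b (k + 1) := by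
          rw [sum_Ico_eq_sum_range]
          refine sum_congr rfl fun k _ => ?_
          rw [Nat.dist_eq_sub_of_le (by omega)]
          congr 1; omega
      _ ≤ ∑ k ∈ range K, b (k + 1) :=
          sum_le_sum_of_subset_of_nonneg (range_subset_range.2 (by omega)) fun k _ _ => hb _
      _ = _ := hS'
  rw [← sum_range_add_sum_Ico _ (show h + 1 ≤ K from hh)]
  linarith

section VanDerCorput

variable {𝕜 E : Type*} [RCLike 𝕜] [NormedAddCommGroup E] [InnerProductSpace 𝕜 E]
  {v : ℕ → E} {C : ℝ} {b : ℕ → ℝ} {ε : ℝ} {K M N : ℕ}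

lemma norm_sum_Ico_le_of_norm_sum_inner_le (hC : ∀ n, ‖v n‖ ≤ C) (hb : ∀ d, 0 ≤ b d)
    (hK : 0 < K) (hMN : M ≤ N)
    (hcorr : ∀ d < K, ∀ s < K,
      ‖∑ n ∈ Ico (M + s) (N + s), (inner 𝕜 (v (n + d)) (v n) : 𝕜)‖ ≤ (N - M : ℕ) * (b d + ε)) :
    ‖∑ n ∈ Ico M N, v n‖
      ≤ 2 * K * C + (N - M : ℕ) * √(ε + (b 0 + 2 * ∑ d ∈ Icc 1 K, b d) / K) := by
  set L : ℝ := ((N - M : ℕ) : ℝ)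
  set Q := ε + (b 0 + 2 * ∑ d ∈ Icc 1 K, b d) / K with hQ
  set W := ∑ n ∈ Ico M N, ∑ h ∈ range K, v (n + h)
  have hK' : (0 : ℝ) < K := by exact_mod_cast hK
  have hpair : ∀ h ∈ range K, ∀ h' ∈ range K,
      ‖∑ n ∈ Ico M N, (inner 𝕜 (v (n + h)) (v (n + h')) : 𝕜)‖ ≤ L * (b (h.dist h') + ε) := by
    intro h hh h' hh'
    rw [mem_range] at hh hh'
    rw [norm_sum_Ico_inner_shift]
    exact hcorr _ (by unfold Nat.dist; omega) _ (by omega)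
  have hrow : ∀ h ∈ range K, ∑ h' ∈ range K, (b (h.dist h') + ε) ≤ K * Q := fun h hh => by
    rw [sum_add_distrib, sum_const, card_range, nsmul_eq_mul, hQ, mul_add,
      mul_div_cancel₀ _ hK'.ne']
    linarith [sum_range_dist_le hb (mem_range.1 hh)]
  have hW : ‖W‖ ^ 2 ≤ (K * L) ^ 2 * Q := by
    refine (norm_sum_sum_sq_le _ _ _ _ hpair).trans ?_
    rw [Nat.card_Ico]
    calc L * ∑ h ∈ range K, ∑ h' ∈ range K, L * (b (h.dist h') + ε)
        = L ^ 2 * ∑ h ∈ range K, ∑ h' ∈ range K, (b (h.dist h') + ε) := by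
          simp_rw [← mul_sum]; ring
      _ ≤ L ^ 2 * ∑ _h ∈ range K, K * Q := by gcongr with h hh; exact hrow h hh
      _ = (K * L) ^ 2 * Q := by rw [sum_const, card_range, nsmul_eq_mul]; ring
  have hW' : ‖W‖ ≤ K * (L * √Q) := by
    have := Real.abs_le_sqrt hW
    rwa [abs_norm, Real.sqrt_mul (sq_nonneg _), Real.sqrt_sq (by positivity), mul_assoc] at this
  refine le_of_mul_le_mul_left ?_ hK'
  calc (K : ℝ) * ‖∑ n ∈ Ico M N, v n‖ ≤ ‖W‖ + 2 * K ^ 2 * C := mul_norm_sum_Ico_le 𝕜 hC hMN K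
    _ ≤ K * (L * √Q) + 2 * K ^ 2 * C := by gcongr
    _ = K * (2 * K * C + L * √Q) := by ring

lemma norm_average_le_of_corrAvg_le (hC : ∀ n, ‖v n‖ ≤ C) (hb : ∀ d, 0 ≤ b d) (hK : 0 < K)
    (hMN : M < N)
    (hcorr : ∀ d < K, ∀ s < K, corrAvg 𝕜 v d (M + s) (N + s) ≤ b d + ε) :
    ‖(((N - M : ℕ) : ℝ) : 𝕜)⁻¹ • ∑ n ∈ Ico M N, v n‖
      ≤ 2 * K * C / (N - M : ℕ) + √(ε + (b 0 + 2 * ∑ d ∈ Icc 1 K, b d) / K) := by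
  have hL : (0 : ℝ) < (N - M : ℕ) := by exact_mod_cast Nat.sub_pos_of_lt hMN
  rw [norm_smul, norm_inv, RCLike.norm_ofReal, abs_of_pos hL, inv_mul_eq_div, div_le_iff₀ hL,
    add_mul, div_mul_cancel₀ _ hL.ne', mul_comm _ (((N - M : ℕ) : ℝ))]
  refine norm_sum_Ico_le_of_norm_sum_inner_le (𝕜 := 𝕜) hC hb hK hMN.le fun d hd s hs => ?_
  have := hcorr d hd s hs
  rwa [corrAvg, Nat.add_sub_add_right, div_le_iff₀ hL, mul_comm] at this

end VanDerCorput

/-- **Van der Corput Lemma** (uniform-interval version). If for each `h` the correlation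
averages along any sequence of intervals of lengths tending to infinity are bounded
above (in `limsup`) by `b h`, and the Cesàro averages of `b h` tend to `0`, then the
averages of `v n` over any such sequence of intervals tend to `0` in norm. -/
theorem van_der_corput_intervals
    {𝕜 H : Type*} [RCLike 𝕜] [NormedAddCommGroup H] [InnerProductSpace 𝕜 H]
    (v : ℕ → H) (hv : ∃ C : ℝ, ∀ n, ‖v n‖ ≤ C)
    (b : ℕ → ℝ)
    (hbd : ∀ h : ℕ, ∀ M N : ℕ → ℕ, Tendsto (fun j => N j - M j) atTop atTop →
      limsup (fun j =>
        ‖(∑ n ∈ Finset.Ico (M j) (N j), (inner 𝕜 (v (n + h)) (v n) : 𝕜))‖ /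
          ((N j - M j : ℕ) : ℝ)) atTop ≤ b h)
    (hb : Tendsto (fun H' : ℕ => (∑ h ∈ Finset.Icc 1 H', b h) / (H' : ℝ)) atTop (𝓝 0)) :
    ∀ M N : ℕ → ℕ, Tendsto (fun j => N j - M j) atTop atTop →
      Tendsto (fun j =>
        ‖((((N j - M j : ℕ) : ℝ) : 𝕜))⁻¹ • ∑ n ∈ Finset.Ico (M j) (N j), v n‖) atTop (𝓝 0) := by
  obtain ⟨C, hC⟩ := hv
  have hb0 : ∀ d, 0 ≤ b d := fun d => nonneg_of_forall_limsup_corrAvg_le hC (hbd d)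
  intro M N hMN
  refine tendsto_order.2 ⟨fun a ha => .of_forall fun j => ha.trans_le (norm_nonneg _),
    fun δ hδ => ?_⟩
  have hε : 0 < δ ^ 2 / 2 := by positivity
  have hcesaro : Tendsto (fun K : ℕ => (b 0 + 2 * ∑ h ∈ Icc 1 K, b h) / K) atTop (𝓝 0) := by
    simpa [add_div, mul_div_assoc] using
      (tendsto_const_div_atTop_nhds_zero_nat (b 0)).add (hb.const_mul 2)
  obtain ⟨K, hKQ, hK⟩ :=
    ((hcesaro.eventually (gt_mem_nhds hε)).and (eventually_gt_atTop 0)).exists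
  set Q := δ ^ 2 / 2 + (b 0 + 2 * ∑ h ∈ Icc 1 K, b h) / K with hQdef
  have hQ : √Q < δ := (Real.sqrt_lt' hδ).2 (by rw [hQdef]; linarith)
  choose L₀ hL₀ using fun d => exists_forall_corrAvg_lt hC (hbd d) hε
  have hbound : ∀ᶠ j in atTop, ‖((((N j - M j : ℕ) : ℝ) : 𝕜))⁻¹ • ∑ n ∈ Ico (M j) (N j), v n‖
      ≤ 2 * K * C / (N j - M j : ℕ) + √Q := by
    filter_upwards [hMN.eventually_ge_atTop (max 1 ((range K).sup L₀))] with j hj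
    refine norm_average_le_of_corrAvg_le hC hb0 hK (by omega) fun d hd s _ => (hL₀ d _ _ ?_).le
    rw [Nat.add_sub_add_right]
    exact (le_sup (mem_range.2 hd)).trans (le_of_max_le_right hj)
  have hlim : Tendsto (fun j => 2 * K * C / (N j - M j : ℕ) + √Q) atTop (𝓝 √Q) := by
    simpa using ((tendsto_const_div_atTop_nhds_zero_nat (2 * K * C)).comp hMN).add_const √Q
  filter_upwards [hbound, hlim.eventually (gt_mem_nhds hQ)] with j using lt_of_le_of_lt
end

section
/- Let (v_{N,n})_{N,n∈ℕ} be a uniformly bounded doubly-indexed sequence of vectors in a real (or complex) Hilbert space H. For every h ∈ ℕ set b_h = limsup_{N→∞} | (1/N) Σ_{n=1}^{N} ⟨v_{N,n+h}, v_{N,n}⟩ |. Suppose lim_{H→∞} (1/H) Σ_{h=1}^{H} b_h = 0. Then lim_{N→∞} ‖ (1/N) Σ_{n=1}^{N} v_{N,n} ‖ = 0. -/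
/-!
Fix a window length `K`. Up to `O(K²)`, `K • ∑_{n<N} uₙ` equals `∑_{n<N} ∑_{k<K} u_{n+k}`, whose
square is at most `N ∑_{n<N} ‖∑_{k<K} u_{n+k}‖²` by Cauchy–Schwarz. Expanding these squares, the
sum over `n` of each cross term `⟨u_{n+k}, u_{n+h}⟩` is, up to `O(K)`, the correlation
`∑_{n<N} ⟨u_{n+k-h}, uₙ⟩`. Hence
`(‖∑_{n<N} uₙ‖ / N)² ≤ 2C²/K + (4/K) ∑_{d=1}^{K} ‖(1/N) ∑_{n<N} ⟨u_{n+d}, uₙ⟩‖ + O(K²/N)`.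
For `uₙ = v_{N,n+1}` the `limsup` in `N` of the right side is at most
`2C²/K + 4 (1/K) ∑_{d=1}^{K} b_d`, which tends to `0` as `K → ∞`.
-/

open Filter Topology Finset
open scoped InnerProductSpace

lemma Finset.sum_Icc_one_eq_sum_range {M : Type*} [AddCommMonoid M] (f : ℕ → M) (N : ℕ) :
    ∑ n ∈ Icc 1 N, f n = ∑ n ∈ range N, f (n + 1) := by
  rw [range_eq_Ico, sum_Ico_add', zero_add, Ico_add_one_right_eq_Icc]

section Limits

lemma tendsto_zero_of_eventually_le_add {α ι : Type*} {l : Filter α} {l' : Filter ι} [l'.NeBot]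
    {a : α → ℝ} {c : ι → ℝ} (ha : ∀ x, 0 ≤ a x) (hc : Tendsto c l' (𝓝 0))
    (h : ∀ᶠ i in l', ∀ ε > 0, ∀ᶠ x in l, a x ≤ c i + ε) : Tendsto a l (𝓝 0) := by
  refine tendsto_order.2 ⟨fun b hb => .of_forall fun x => hb.trans_le (ha x), fun b hb => ?_⟩
  obtain ⟨i, hci, hi⟩ := ((hc.eventually (gt_mem_nhds (half_pos hb))).and h).exists
  filter_upwards [hi (b / 2) (half_pos hb)] with x hx
  linarith

lemma eventually_sum_le_sum_limsup_add {ι α : Type*} {l : Filter α} (s : Finset ι)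
    {g : ι → α → ℝ} (hg : ∀ i ∈ s, IsBoundedUnder (· ≤ ·) l (g i)) {ε : ℝ} (hε : 0 < ε) :
    ∀ᶠ x in l, ∑ i ∈ s, g i x ≤ ∑ i ∈ s, limsup (g i) l + ε := by
  set δ := ε / (#s + 1)
  have hδ : 0 < δ := by positivity
  have hsδ : #s * δ ≤ ε := by
    rw [mul_div_assoc', div_le_iff₀ (by positivity)]
    linarith
  filter_upwards [(eventually_all_finset s).2 fun i hi =>
    eventually_lt_of_limsup_lt (lt_add_of_pos_right _ hδ) (hg i hi)] with x hx
  calc ∑ i ∈ s, g i x ≤ ∑ i ∈ s, (limsup (g i) l + δ) := sum_le_sum fun i hi => (hx i hi).le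
    _ = ∑ i ∈ s, limsup (g i) l + #s * δ := by rw [sum_add_distrib, sum_const, nsmul_eq_mul]
    _ ≤ ∑ i ∈ s, limsup (g i) l + ε := by gcongr

end Limits

section NormedGroup

variable {E : Type*} [SeminormedAddCommGroup E]

lemma norm_sum_range_add_sub_sum_range_le {c : ℕ → E} {C : ℝ} (hc : ∀ n, ‖c n‖ ≤ C) (h N : ℕ) :
    ‖∑ n ∈ range N, c (n + h) - ∑ n ∈ range N, c n‖ ≤ 2 * h * C := by
  have hsplit : ∑ n ∈ range N, c (n + h) - ∑ n ∈ range N, c n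
      = ∑ n ∈ range h, c (N + n) - ∑ n ∈ range h, c n := by
    have h₁ := sum_range_add c h N
    have h₂ := sum_range_add c N h
    simp only [add_comm h] at h₁
    rw [sub_eq_sub_iff_add_eq_add, add_comm, ← h₁, h₂, add_comm]
  have hbound : ∀ f : ℕ → E, (∀ n, ‖f n‖ ≤ C) → ‖∑ n ∈ range h, f n‖ ≤ h * C := fun f hf =>
    (norm_sum_le_of_le _ fun n _ => hf n).trans_eq (by simp)
  calc _ ≤ ‖∑ n ∈ range h, c (N + n)‖ + ‖∑ n ∈ range h, c n‖ := hsplit ▸ norm_sub_le _ _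
    _ ≤ h * C + h * C := add_le_add (hbound _ fun n => hc _) (hbound _ hc)
    _ = 2 * h * C := by ring

lemma norm_nsmul_sum_range_sub_sum_window_le {u : ℕ → E} {C : ℝ} (hu : ∀ n, ‖u n‖ ≤ C)
    (N K : ℕ) :
    ‖K • ∑ n ∈ range N, u n - ∑ n ∈ range N, ∑ k ∈ range K, u (n + k)‖ ≤ 2 * K ^ 2 * C := by
  rw [sum_comm, ← card_range K, ← sum_const, card_range, ← sum_sub_distrib]
  calc _ ≤ ∑ k ∈ range K, 2 * K * C := norm_sum_le_of_le _ fun k hk => by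
        rw [norm_sub_rev]
        refine (norm_sum_range_add_sub_sum_range_le hu k N).trans ?_
        have : (k : ℝ) ≤ K := by exact_mod_cast (mem_range.1 hk).le
        have hC : 0 ≤ C := (norm_nonneg _).trans (hu 0)
        gcongr
    _ = 2 * K ^ 2 * C := by rw [sum_const, card_range, nsmul_eq_mul]; ring

lemma norm_sum_sq_le_card_mul {ι : Type*} (s : Finset ι) (f : ι → E) :
    ‖∑ i ∈ s, f i‖ ^ 2 ≤ #s * ∑ i ∈ s, ‖f i‖ ^ 2 :=
  (pow_le_pow_left₀ (norm_nonneg _) (norm_sum_le _ _) 2).trans sq_sum_le_card_mul_sum_sq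

end NormedGroup

section InnerProduct

variable {𝕜 E : Type*} [RCLike 𝕜] [NormedAddCommGroup E] [InnerProductSpace 𝕜 E]

lemma norm_sum_range_sq (x : ℕ → E) (K : ℕ) :
    ‖∑ k ∈ range K, x k‖ ^ 2 =
      ∑ k ∈ range K, (‖x k‖ ^ 2 + 2 * RCLike.re (∑ h ∈ range k, ⟪x k, x h⟫_𝕜)) := by
  induction K with
  | zero => simp
  | succ K ih =>
    rw [sum_range_succ, norm_add_sq (𝕜 := 𝕜), ih, sum_range_succ, inner_re_symm, inner_sum]
    ring

variable {u : ℕ → E} {C : ℝ}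

lemma norm_inner_le_sq (hu : ∀ n, ‖u n‖ ≤ C) (m n : ℕ) : ‖⟪u m, u n⟫_𝕜‖ ≤ C ^ 2 :=
  (norm_inner_le_norm _ _).trans <| by
    rw [sq]; exact mul_le_mul (hu m) (hu n) (norm_nonneg _) ((norm_nonneg _).trans (hu m))

lemma norm_sum_range_inner_le (hu : ∀ n, ‖u n‖ ≤ C) (N d : ℕ) :
    ‖∑ n ∈ range N, ⟪u (n + d), u n⟫_𝕜‖ ≤ N * C ^ 2 :=
  (norm_sum_le_of_le _ fun n _ => norm_inner_le_sq hu _ _).trans_eq (by simp)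

lemma norm_sum_range_inner_add_add_le (hu : ∀ n, ‖u n‖ ≤ C) (N h d : ℕ) :
    ‖∑ n ∈ range N, ⟪u (n + h + d), u (n + h)⟫_𝕜‖ ≤
      ‖∑ n ∈ range N, ⟪u (n + d), u n⟫_𝕜‖ + 2 * h * C ^ 2 :=
  (norm_le_norm_add_norm_sub' _ _).trans <| add_le_add_right
    (norm_sum_range_add_sub_sum_range_le (c := fun m => ⟪u (m + d), u m⟫_𝕜)
      (fun _ => norm_inner_le_sq hu _ _) h N) _

lemma re_sum_range_sum_range_inner_le (hu : ∀ n, ‖u n‖ ≤ C) (N : ℕ) {k K : ℕ} (hk : k ≤ K) :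
    RCLike.re (∑ h ∈ range k, ∑ n ∈ range N, ⟪u (n + k), u (n + h)⟫_𝕜) ≤
      ∑ j ∈ range K, ‖∑ n ∈ range N, ⟪u (n + (j + 1)), u n⟫_𝕜‖ + 2 * K ^ 2 * C ^ 2 := by
  set γ : ℕ → ℝ := fun d => ‖∑ n ∈ range N, ⟪u (n + d), u n⟫_𝕜‖
  have hK : (k : ℝ) ≤ K := by exact_mod_cast hk
  have hreflect : ∑ h ∈ range k, γ (k - h) = ∑ j ∈ range k, γ (j + 1) := by
    rw [← sum_range_reflect]
    exact sum_congr rfl fun j hj => by rw [mem_range] at hj; congr 1; omega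
  calc _ ≤ ‖∑ h ∈ range k, ∑ n ∈ range N, ⟪u (n + k), u (n + h)⟫_𝕜‖ := RCLike.re_le_norm _
    _ ≤ ∑ h ∈ range k, (γ (k - h) + 2 * K * C ^ 2) := norm_sum_le_of_le _ fun h hh => by
        have hhk : h < k := mem_range.1 hh
        have hshift := norm_sum_range_inner_add_add_le (𝕜 := 𝕜) hu N h (k - h)
        simp only [add_assoc, Nat.add_sub_cancel' hhk.le] at hshift
        have : (h : ℝ) ≤ K := by exact_mod_cast (hhk.trans_le hk).le
        exact hshift.trans (by gcongr)
    _ ≤ _ := by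
        rw [sum_add_distrib, hreflect, sum_const, card_range, nsmul_eq_mul]
        gcongr ?_ + ?_
        · exact sum_le_sum_of_subset_of_nonneg (range_subset_range.2 hk) fun _ _ _ => norm_nonneg _
        · exact (mul_le_mul_of_nonneg_right hK (by positivity)).trans_eq (by ring)

lemma sum_norm_sum_window_sq_le (hu : ∀ n, ‖u n‖ ≤ C) (N K : ℕ) :
    ∑ n ∈ range N, ‖∑ k ∈ range K, u (n + k)‖ ^ 2 ≤
      K * (N * C ^ 2 + 2 * (∑ j ∈ range K, ‖∑ n ∈ range N, ⟪u (n + (j + 1)), u n⟫_𝕜‖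
        + 2 * K ^ 2 * C ^ 2)) := by
  simp_rw [norm_sum_range_sq (𝕜 := 𝕜)]
  rw [sum_comm]
  refine (sum_le_sum fun k hk => ?_).trans_eq (by rw [sum_const, card_range, nsmul_eq_mul])
  rw [sum_add_distrib, ← mul_sum, ← map_sum, sum_comm]
  gcongr
  · exact (sum_le_sum fun n _ => pow_le_pow_left₀ (norm_nonneg _) (hu _) 2).trans_eq (by simp)
  · exact re_sum_range_sum_range_inner_le hu N (mem_range.1 hk).le

theorem sq_mul_norm_sum_range_le (hu : ∀ n, ‖u n‖ ≤ C) (N K : ℕ) :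
    (K * ‖∑ n ∈ range N, u n‖) ^ 2 ≤
      2 * N * K * (N * C ^ 2 + 2 * (∑ j ∈ range K, ‖∑ n ∈ range N, ⟪u (n + (j + 1)), u n⟫_𝕜‖
        + 2 * K ^ 2 * C ^ 2)) + 8 * K ^ 4 * C ^ 2 := by
  set W := ∑ n ∈ range N, ∑ k ∈ range K, u (n + k)
  have hsmooth : K * ‖∑ n ∈ range N, u n‖ ≤ ‖W‖ + 2 * K ^ 2 * C := by
    rw [← nsmul_eq_mul, ← RCLike.norm_nsmul 𝕜]
    exact (norm_le_norm_add_norm_sub' _ W).trans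
      (add_le_add_right (norm_nsmul_sum_range_sub_sum_window_le hu N K) _)
  have hW : ‖W‖ ^ 2 ≤ N * (K * (N * C ^ 2 + 2 * (∑ j ∈ range K,
      ‖∑ n ∈ range N, ⟪u (n + (j + 1)), u n⟫_𝕜‖ + 2 * K ^ 2 * C ^ 2))) := by
    refine (norm_sum_sq_le_card_mul _ _).trans ?_
    rw [card_range]
    gcongr
    exact sum_norm_sum_window_sq_le hu N K
  have hK : 0 ≤ (K : ℝ) * ‖∑ n ∈ range N, u n‖ := by positivity
  nlinarith [sq_nonneg (‖W‖ - 2 * K ^ 2 * C)]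

lemma sq_norm_sum_range_div_le (hu : ∀ n, ‖u n‖ ≤ C) {N K : ℕ} (hN : 1 ≤ N) (hK : 1 ≤ K) :
    (‖∑ n ∈ range N, u n‖ / N) ^ 2 ≤
      2 * C ^ 2 / K + 4 / K * ∑ j ∈ range K, ‖∑ n ∈ range N, ⟪u (n + (j + 1)), u n⟫_𝕜‖ / N
        + 16 * K ^ 2 * C ^ 2 / N := by
  have hN' : (1 : ℝ) ≤ N := by exact_mod_cast hN
  have hK' : (1 : ℝ) ≤ K := by exact_mod_cast hK
  have key := sq_mul_norm_sum_range_le (𝕜 := 𝕜) hu N K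
  set Γ := ∑ j ∈ range K, ‖∑ n ∈ range N, ⟪u (n + (j + 1)), u n⟫_𝕜‖
  rw [← sum_div]
  have hlhs : (‖∑ n ∈ range N, u n‖ / N) ^ 2 = (K * ‖∑ n ∈ range N, u n‖) ^ 2 / (K * N) ^ 2 := by
    field_simp
  have hrhs : (2 * C ^ 2 / K + 4 / K * (Γ / N) + 16 * K ^ 2 * C ^ 2 / N) * (K * N) ^ 2
      = 2 * N * K * (N * C ^ 2 + 2 * Γ) + 16 * K ^ 4 * C ^ 2 * N := by
    field_simp
    ring
  rw [hlhs, div_le_iff₀ (by positivity), hrhs]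
  have h1 : (K : ℝ) ^ 3 * (C ^ 2 * N) ≤ K ^ 4 * (C ^ 2 * N) :=
    mul_le_mul_of_nonneg_right (pow_le_pow_right₀ hK' (by norm_num)) (by positivity)
  have h2 : (K : ℝ) ^ 4 * C ^ 2 ≤ K ^ 4 * C ^ 2 * N := le_mul_of_one_le_right (by positivity) hN'
  nlinarith

theorem tendsto_norm_sum_range_div_of_tendsto_cesaro_limsup {u : ℕ → ℕ → E}
    (hu : ∀ N n, ‖u N n‖ ≤ C)
    (hb : Tendsto (fun K : ℕ => (∑ j ∈ range K, limsup (fun N : ℕ =>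
      ‖∑ n ∈ range N, ⟪u N (n + (j + 1)), u N n⟫_𝕜‖ / N) atTop) / K) atTop (𝓝 0)) :
    Tendsto (fun N : ℕ => ‖∑ n ∈ range N, u N n‖ / N) atTop (𝓝 0) := by
  set g : ℕ → ℕ → ℝ := fun j N => ‖∑ n ∈ range N, ⟪u N (n + (j + 1)), u N n⟫_𝕜‖ / N
  have hg : ∀ j, IsBoundedUnder (· ≤ ·) atTop (g j) := fun j =>
    isBoundedUnder_of ⟨C ^ 2, fun N => div_le_of_le_mul₀ N.cast_nonneg (sq_nonneg C)
      ((norm_sum_range_inner_le (hu N) N _).trans_eq (mul_comm _ _))⟩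
  have hsq : Tendsto (fun N : ℕ => (‖∑ n ∈ range N, u N n‖ / N) ^ 2) atTop (𝓝 0) := by
    refine tendsto_zero_of_eventually_le_add (fun N => sq_nonneg _)
      (c := fun K : ℕ => 2 * C ^ 2 / K + 4 * ((∑ j ∈ range K, limsup (g j) atTop) / K))
      (by simpa using (tendsto_const_div_atTop_nhds_zero_nat (2 * C ^ 2)).add (hb.const_mul 4)) ?_
    filter_upwards [eventually_ge_atTop 1] with K hK ε hε
    have hK' : (0 : ℝ) < K := by exact_mod_cast hK
    filter_upwards [eventually_sum_le_sum_limsup_add (range K) (fun j _ => hg j)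
        (by positivity : 0 < K * ε / 8),
      (tendsto_const_div_atTop_nhds_zero_nat (16 * K ^ 2 * C ^ 2 : ℝ)).eventually
        (ge_mem_nhds (half_pos hε)),
      eventually_ge_atTop 1] with N hsum herr hN
    have hcorr : 4 / K * ∑ j ∈ range K, g j N ≤
        4 * ((∑ j ∈ range K, limsup (g j) atTop) / K) + ε / 2 := by
      calc _ ≤ 4 / K * (∑ j ∈ range K, limsup (g j) atTop + K * ε / 8) := by gcongr
        _ = _ := by field_simp; ring
    have hvdc := sq_norm_sum_range_div_le (𝕜 := 𝕜) (hu N) hN hK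
    linarith
  simpa only [Real.sqrt_zero, Real.sqrt_sq (div_nonneg (norm_nonneg _) (Nat.cast_nonneg _))]
    using hsq.sqrt

end InnerProduct

/-- **Lemma A.2.** Van der Corput lemma for doubly-indexed sequences: if the Cesàro
averages of `b h = limsup_N |(1/N) Σ_{n=1}^N ⟨v_{N,n+h}, v_{N,n}⟩|` tend to `0`,
then `‖(1/N) Σ_{n=1}^N v_{N,n}‖ → 0`. -/
theorem van_der_corput_doubly_indexed
    {𝕜 H : Type*} [RCLike 𝕜] [NormedAddCommGroup H] [InnerProductSpace 𝕜 H]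
    (v : ℕ → ℕ → H) (hv : ∃ C : ℝ, ∀ N n, ‖v N n‖ ≤ C)
    (hb : Tendsto (fun H' : ℕ =>
        (∑ h ∈ Finset.Icc 1 H',
          limsup (fun N : ℕ =>
            ‖(∑ n ∈ Finset.Icc 1 N, (inner 𝕜 (v N (n + h)) (v N n) : 𝕜))‖ / (N : ℝ)) atTop)
          / (H' : ℝ)) atTop (𝓝 0)) :
    Tendsto (fun N : ℕ =>
      ‖(((N : ℝ) : 𝕜))⁻¹ • ∑ n ∈ Finset.Icc 1 N, v N n‖) atTop (𝓝 0) := by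
  obtain ⟨C, hC⟩ := hv
  have hnorm : ∀ N : ℕ, ‖((N : ℝ) : 𝕜)⁻¹ • ∑ n ∈ Icc 1 N, v N n‖
      = ‖∑ n ∈ range N, v N (n + 1)‖ / N := fun N => by
    rw [norm_smul, norm_inv, RCLike.norm_ofReal, abs_of_nonneg N.cast_nonneg,
      sum_Icc_one_eq_sum_range, inv_mul_eq_div]
  simp only [hnorm]
  refine tendsto_norm_sum_range_div_of_tendsto_cesaro_limsup (𝕜 := 𝕜)
    (u := fun N n => v N (n + 1)) (fun N n => hC N _) ?_
  simpa only [sum_Icc_one_eq_sum_range, add_right_comm _ 1] using hb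
end

section
/- Let ℓ ∈ ℕ, let (X, 𝒳, μ) be a probability space, let 𝒳₁, 𝒳₂, …, 𝒳_ℓ be sub-σ-algebras of 𝒳, and let f ∈ L^∞(μ) be nonnegative. Then ∫ f · E(f|𝒳₁) · E(f|𝒳₂) · … · E(f|𝒳_ℓ) dμ ≥ ( ∫ f dμ )^{ℓ+1}. -/
/-!
Put `F = f` and `Gᵢ = E(f|𝒳ᵢ)`, viewed in `ℝ≥0∞`, and `p = 1/(ℓ+1)`. Since `f` vanishes a.e. where
some `Gᵢ` does, `F = (F ∏ Gᵢ)^p ∏ (F / Gᵢ)^p` a.e., so Hölder's inequality with `ℓ+1` exponents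
equal to `p` gives `∫ F ≤ (∫ F ∏ Gᵢ)^p ∏ (∫ F / Gᵢ)^p`. Each `∫ F / Gᵢ ≤ 1`: the weight `1 / Gᵢ` is
`𝒳ᵢ`-measurable, so `F` may be replaced by its conditional expectation `Gᵢ` under the integral.
-/

open MeasureTheory
open scoped ENNReal

namespace ENNReal

theorem rpow_mul_prod_rpow_mul_inv {ι : Type*} [Fintype ι] (a : ℝ≥0∞) {b : ι → ℝ≥0∞}
    (hb_top : ∀ i, b i ≠ ∞) (hb_zero : ∀ i, b i = 0 → a = 0) :
    (a * ∏ i, b i) ^ ((Fintype.card ι + 1 : ℕ)⁻¹ : ℝ)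
      * ∏ i, (a * (b i)⁻¹) ^ ((Fintype.card ι + 1 : ℕ)⁻¹ : ℝ) = a := by
  rcases eq_or_ne a 0 with rfl | ha
  · simp only [zero_mul, Finset.prod_const]
    rw [zero_rpow_of_pos (by positivity), zero_mul]
  have hb : (∏ i, b i) * ∏ i, (b i)⁻¹ = 1 := by
    rw [← Finset.prod_mul_distrib]
    exact Finset.prod_eq_one fun i _ =>
      ENNReal.mul_inv_cancel (fun h => ha (hb_zero i h)) (hb_top i)
  rw [prod_rpow_of_nonneg (by positivity), ← mul_rpow_of_nonneg _ _ (by positivity),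
    Finset.prod_mul_distrib, Finset.prod_const, Finset.card_univ, mul_mul_mul_comm, hb, mul_one,
    ← pow_succ']
  exact pow_rpow_inv_natCast (Nat.succ_ne_zero _) a

end ENNReal

namespace MeasureTheory

theorem lintegral_pow_le_lintegral_mul_prod {X ι : Type*} [MeasurableSpace X] {μ : Measure X}
    [Fintype ι] {F : X → ℝ≥0∞} {G : ι → X → ℝ≥0∞} (hF : AEMeasurable F μ)
    (hG : ∀ i, AEMeasurable (G i) μ) (hG_top : ∀ᵐ x ∂μ, ∀ i, G i x ≠ ∞)
    (hG_zero : ∀ᵐ x ∂μ, ∀ i, G i x = 0 → F x = 0)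
    (hFG : ∀ i, ∫⁻ x, F x * (G i x)⁻¹ ∂μ ≤ 1) :
    (∫⁻ x, F x ∂μ) ^ (Fintype.card ι + 1) ≤ ∫⁻ x, F x * ∏ i, G i x ∂μ := by
  set p : ℝ := ((Fintype.card ι + 1 : ℕ)⁻¹ : ℝ)
  have hp : 0 ≤ p := by positivity
  have hsum : p + ∑ _i : ι, p = 1 := by
    simp only [p, Finset.sum_const, Finset.card_univ, nsmul_eq_mul]
    field_simp
    push_cast
    ring
  have holder := ENNReal.lintegral_mul_prod_norm_pow_le (μ := μ) Finset.univ
    (g := fun x => F x * ∏ i, G i x) (f := fun i x => F x * (G i x)⁻¹)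
    (hF.mul (Finset.aemeasurable_fun_prod _ fun i _ => hG i))
    (fun i _ => hF.mul (hG i).inv) p hsum hp fun _ _ => hp
  have hF_eq : ∫⁻ x, F x ∂μ
      = ∫⁻ x, (F x * ∏ i, G i x) ^ p * ∏ i, (F x * (G i x)⁻¹) ^ p ∂μ := by
    refine lintegral_congr_ae ?_
    filter_upwards [hG_top, hG_zero] with x htop hzero
    exact (ENNReal.rpow_mul_prod_rpow_mul_inv (F x) htop hzero).symm
  have hle : ∫⁻ x, F x ∂μ ≤ (∫⁻ x, F x * ∏ i, G i x ∂μ) ^ p := by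
    calc ∫⁻ x, F x ∂μ ≤ _ := hF_eq.trans_le holder
      _ ≤ (∫⁻ x, F x * ∏ i, G i x ∂μ) ^ p * 1 := by
        gcongr
        exact Finset.prod_le_one' fun i _ => ENNReal.rpow_le_one (hFG i) hp
      _ = _ := mul_one _
  calc (∫⁻ x, F x ∂μ) ^ (Fintype.card ι + 1)
      ≤ ((∫⁻ x, F x * ∏ i, G i x ∂μ) ^ p) ^ (Fintype.card ι + 1) := by gcongr
    _ = ∫⁻ x, F x * ∏ i, G i x ∂μ := ENNReal.rpow_inv_natCast_pow (Nat.succ_ne_zero _) _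

variable {X : Type*} {m m0 : MeasurableSpace X} {μ : Measure X} {f : X → ℝ}

theorem setLIntegral_ofReal_condExp (hm : m ≤ m0) [SigmaFinite (μ.trim hm)]
    (hf : Integrable f μ) (hf0 : 0 ≤ᵐ[μ] f) {s : Set X} (hs : MeasurableSet[m] s) :
    ∫⁻ x in s, ENNReal.ofReal ((μ[f|m]) x) ∂μ = ∫⁻ x in s, ENNReal.ofReal (f x) ∂μ := by
  rw [← ofReal_integral_eq_lintegral_ofReal integrable_condExp.integrableOn
      (ae_restrict_of_ae (condExp_nonneg hf0)),
    ← ofReal_integral_eq_lintegral_ofReal hf.integrableOn (ae_restrict_of_ae hf0),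
    setIntegral_condExp hm hf hs]

theorem lintegral_ofReal_condExp_mul (hm : m ≤ m0) [SigmaFinite (μ.trim hm)]
    (hf : Integrable f μ) (hf0 : 0 ≤ᵐ[μ] f) {φ : X → ℝ≥0∞} (hφ : Measurable[m] φ) :
    ∫⁻ x, ENNReal.ofReal ((μ[f|m]) x) * φ x ∂μ = ∫⁻ x, ENNReal.ofReal (f x) * φ x ∂μ := by
  -- An `m`-measurable `φ` only sees the weighted measures through their traces on `m`.
  have htrim : (μ.withDensity fun x => ENNReal.ofReal ((μ[f|m]) x)).trim hm
      = (μ.withDensity fun x => ENNReal.ofReal (f x)).trim hm := by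
    refine @Measure.ext _ m _ _ fun s hs => ?_
    rw [trim_measurableSet_eq hm hs, trim_measurableSet_eq hm hs, withDensity_apply _ (hm s hs),
      withDensity_apply _ (hm s hs), setLIntegral_ofReal_condExp hm hf hf0 hs]
  have hφ0 : AEMeasurable φ μ := (hφ.mono hm le_rfl).aemeasurable
  calc ∫⁻ x, ENNReal.ofReal ((μ[f|m]) x) * φ x ∂μ
      = ∫⁻ x, φ x ∂(μ.withDensity fun x => ENNReal.ofReal ((μ[f|m]) x)).trim hm := by
        rw [lintegral_trim hm hφ, lintegral_withDensity_eq_lintegral_mul₀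
          integrable_condExp.aemeasurable.ennreal_ofReal hφ0]
        rfl
    _ = ∫⁻ x, ENNReal.ofReal (f x) * φ x ∂μ := by
        rw [htrim, lintegral_trim hm hφ,
          lintegral_withDensity_eq_lintegral_mul₀ hf.aemeasurable.ennreal_ofReal hφ0]
        rfl

theorem lintegral_ofReal_mul_inv_condExp_le (hm : m ≤ m0) [SigmaFinite (μ.trim hm)]
    (hf : Integrable f μ) (hf0 : 0 ≤ᵐ[μ] f) :
    ∫⁻ x, ENNReal.ofReal (f x) * (ENNReal.ofReal ((μ[f|m]) x))⁻¹ ∂μ ≤ μ Set.univ := by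
  rw [← lintegral_ofReal_condExp_mul hm hf hf0
    (φ := fun x => (ENNReal.ofReal ((μ[f|m]) x))⁻¹)
    stronglyMeasurable_condExp.measurable.ennreal_ofReal.inv]
  -- `a * a⁻¹ ≤ 1` holds in `ℝ≥0∞` also at `a = 0`, where `0 * ∞ = 0`.
  calc _ ≤ ∫⁻ _, 1 ∂μ := lintegral_mono fun x => ENNReal.mul_inv_le_one _
    _ = μ Set.univ := lintegral_one

theorem ae_eq_zero_of_condExp_eq_zero (hm : m ≤ m0) [SigmaFinite (μ.trim hm)]
    (hf : Integrable f μ) (hf0 : 0 ≤ᵐ[μ] f) :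
    ∀ᵐ x ∂μ, (μ[f|m]) x = 0 → f x = 0 := by
  set s := {x | (μ[f|m]) x = 0}
  have hs : MeasurableSet[m] s :=
    stronglyMeasurable_condExp.measurable (measurableSet_singleton 0)
  have h : ∫⁻ x in s, ENNReal.ofReal (f x) ∂μ = 0 := by
    rw [← setLIntegral_ofReal_condExp hm hf hf0 hs]
    exact (setLIntegral_congr_fun (hm s hs) fun x (hx : _ = _) => by simp [hx]).trans
      lintegral_zero
  have h' := (ae_restrict_iff' (hm s hs)).1
    ((lintegral_eq_zero_iff' hf.aemeasurable.ennreal_ofReal.restrict).1 h)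
  filter_upwards [h', hf0] with x hx hx0 hxs
  exact le_antisymm (ENNReal.ofReal_eq_zero.1 (hx hxs)) hx0

end MeasureTheory

/-- **Lemma 7.2 (Chu).** For a nonnegative bounded function `f` and sub-σ-algebras
`𝒳₁, …, 𝒳_ℓ`, one has `∫ f · E(f|𝒳₁) ⋯ E(f|𝒳_ℓ) dμ ≥ (∫ f dμ)^{ℓ+1}`. -/
theorem integral_mul_prod_condexp_ge_pow
    {X : Type*} [m0 : MeasurableSpace X] (μ : Measure X) [IsProbabilityMeasure μ]
    (ℓ : ℕ) (m : Fin ℓ → MeasurableSpace X) (hm : ∀ i, m i ≤ m0)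
    (f : X → ℝ) (hfmeas : Measurable f) (hfbdd : ∃ C : ℝ, ∀ x, |f x| ≤ C)
    (hfnonneg : ∀ x, 0 ≤ f x) :
    (∫ x, f x ∂μ) ^ (ℓ + 1) ≤ ∫ x, f x * ∏ i, (μ[f | m i]) x ∂μ := by
  obtain ⟨C, hC⟩ := hfbdd
  have hf_top : MemLp f ∞ μ :=
    memLp_top_of_bound hfmeas.aestronglyMeasurable C (ae_of_all _ hC)
  have hf : Integrable f μ := hf_top.integrable le_top
  have hf0 : 0 ≤ᵐ[μ] f := ae_of_all _ hfnonneg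
  have hg0 : ∀ᵐ x ∂μ, ∀ i, 0 ≤ (μ[f|m i]) x := ae_all_iff.2 fun i => condExp_nonneg hf0
  have hprod0 : 0 ≤ᵐ[μ] fun x => f x * ∏ i, (μ[f|m i]) x :=
    hg0.mono fun x hx => mul_nonneg (hfnonneg x) (Finset.prod_nonneg fun i _ => hx i)
  have hint : Integrable (fun x => f x * ∏ i, (μ[f|m i]) x) μ :=
    hf.mul_of_top_left (by simpa using MemLp.prod' fun i _ => hf_top.condExp (m := m i) le_top)
  have hzero : ∀ᵐ x ∂μ, ∀ i, ENNReal.ofReal ((μ[f|m i]) x) = 0 → ENNReal.ofReal (f x) = 0 := by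
    refine ae_all_iff.2 fun i => ?_
    filter_upwards [ae_eq_zero_of_condExp_eq_zero (hm i) hf hf0, condExp_nonneg hf0]
      with x hx hgx hG
    rw [hx (le_antisymm (ENNReal.ofReal_eq_zero.1 hG) hgx), ENNReal.ofReal_zero]
  have hcore := lintegral_pow_le_lintegral_mul_prod hfmeas.ennreal_ofReal.aemeasurable
    (fun i => integrable_condExp.aemeasurable.ennreal_ofReal)
    (ae_of_all _ fun x i => ENNReal.ofReal_ne_top) hzero
    fun i => (lintegral_ofReal_mul_inv_condExp_le (hm i) hf hf0).trans_eq measure_univ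
  rw [Fintype.card_fin] at hcore
  rw [← ENNReal.ofReal_le_ofReal_iff (integral_nonneg_of_ae hprod0),
    ENNReal.ofReal_pow (integral_nonneg hfnonneg), ofReal_integral_eq_lintegral_ofReal hf hf0,
    ofReal_integral_eq_lintegral_ofReal hint hprod0]
  refine hcore.trans_eq (lintegral_congr_ae ?_)
  filter_upwards [hg0] with x hx
  rw [ENNReal.ofReal_mul (hfnonneg x), ENNReal.ofReal_prod_of_nonneg fun i _ => hx i]
end

section
/- Let σ be a finite positive Borel measure on the circle 𝕋 = ℝ/ℤ such that σ({t}) = 0 for every rational point t ∈ 𝕋 (i.e., every point of the form q mod 1 with q ∈ ℚ), and let r ∈ ℚ. Then for every sequence of intervals ([M_j, N_j))_{j∈ℕ} of integers with N_j − M_j → ∞, one has lim_{j→∞} ∫_𝕋 | (1/(N_j − M_j)) Σ_{n=M_j}^{N_j−1} e(nt + r n²) |² dσ(t) = 0, where e(s) = e^{2πis}. -/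
/-!
For `t` of infinite order in `𝕋` and `d` the denominator of `r`, shifting `n` by `d` changes
`rn²` by an integer, so the term `e(nt + rn²)` gets multiplied by `e(dt) ≠ 1`. Hence
`(1 - e(dt)) Σ_{M ≤ n < N} e(nt + rn²)` telescopes to two sums of `d` terms, the Weyl sums are
bounded in `M, N`, and their averages tend to `0`. Since `σ` does not charge the countably many
rational points, this holds `σ`-a.e., and bounded convergence (the averages have modulus `≤ 1`)
finishes the proof.
-/

open MeasureTheory Filter Topology Finset

theorem sum_Ico_sub_sum_Ico_add_eq {G : Type*} [AddCommGroup G] (g : ℤ → G) {M N : ℤ}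
    (hMN : M ≤ N) (d : ℕ) :
    ∑ n ∈ Ico M N, g n - ∑ n ∈ Ico M N, g (n + d) =
      ∑ n ∈ Ico M (M + d), g n - ∑ n ∈ Ico N (N + d), g n := by
  have split₁ := sum_union (f := g) (Ico_disjoint_Ico_consecutive M N (N + d))
  have split₂ := sum_union (f := g) (Ico_disjoint_Ico_consecutive M (M + d) (N + d))
  rw [Ico_union_Ico_eq_Ico hMN (by omega)] at split₁
  rw [Ico_union_Ico_eq_Ico (by omega) (by omega)] at split₂
  rw [sum_Ico_add']
  linear_combination (norm := abel) split₂ - split₁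

theorem norm_sum_Ico_le_toNat {E : Type*} [SeminormedAddCommGroup E] {g : ℤ → E}
    (hg : ∀ n, ‖g n‖ ≤ 1) (M N : ℤ) : ‖∑ n ∈ Ico M N, g n‖ ≤ (N - M).toNat := by
  simpa [Int.card_Ico] using norm_sum_le_of_le (Ico M N) fun n _ => hg n

theorem norm_sum_Ico_le_of_add_eq_mul {𝕜 : Type*} [NormedField 𝕜] {g : ℤ → 𝕜}
    (hg : ∀ n, ‖g n‖ ≤ 1) {d : ℕ} {z : 𝕜} (hz : z ≠ 1) (hshift : ∀ n, g (n + d) = z * g n)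
    (M N : ℤ) : ‖∑ n ∈ Ico M N, g n‖ ≤ 2 * d / ‖1 - z‖ := by
  rcases lt_or_ge N M with hNM | hMN
  · rw [Ico_eq_empty_of_le hNM.le, sum_empty, norm_zero]
    positivity
  have hz' : 0 < ‖1 - z‖ := norm_pos_iff.2 (sub_ne_zero.2 hz.symm)
  have key : (1 - z) * ∑ n ∈ Ico M N, g n =
      ∑ n ∈ Ico M (M + d), g n - ∑ n ∈ Ico N (N + d), g n := by
    rw [← sum_Ico_sub_sum_Ico_add_eq g hMN d, sub_mul, one_mul, mul_sum]
    simp only [hshift]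
  rw [le_div_iff₀ hz', mul_comm, ← norm_mul, key]
  calc _ ≤ ‖∑ n ∈ Ico M (M + d), g n‖ + ‖∑ n ∈ Ico N (N + d), g n‖ := norm_sub_le _ _
    _ ≤ d + d := by
      gcongr <;> exact (norm_sum_Ico_le_toNat hg _ _).trans_eq (by simp)
    _ = 2 * d := by ring

section Averages

variable {g : ℤ → ℂ}

theorem norm_inv_mul_sum_Ico_le_one (hg : ∀ n, ‖g n‖ ≤ 1) (M N : ℤ) :
    ‖(((N - M : ℤ) : ℝ) : ℂ)⁻¹ * ∑ n ∈ Ico M N, g n‖ ≤ 1 := by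
  rcases le_or_gt N M with hNM | hMN
  · simp [Ico_eq_empty_of_le hNM]
  have hlen : (0 : ℝ) < ((N - M : ℤ) : ℝ) := by exact_mod_cast sub_pos.2 hMN
  rw [norm_mul, norm_inv, Complex.norm_real, Real.norm_of_nonneg hlen.le,
    inv_mul_le_iff₀ hlen, mul_one]
  exact (norm_sum_Ico_le_toNat hg M N).trans_eq (by norm_cast; omega)

theorem tendsto_inv_mul_sum_Ico_of_norm_le {C : ℝ} (hC : ∀ M N, ‖∑ n ∈ Ico M N, g n‖ ≤ C)
    {M N : ℕ → ℤ} (hMN : Tendsto (fun j => N j - M j) atTop atTop) :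
    Tendsto (fun j => (((N j - M j : ℤ) : ℝ) : ℂ)⁻¹ * ∑ n ∈ Ico (M j) (N j), g n)
      atTop (𝓝 0) := by
  have hlen : Tendsto (fun j => |((N j - M j : ℤ) : ℝ)|⁻¹) atTop (𝓝 0) :=
    tendsto_inv_atTop_zero.comp (tendsto_abs_atTop_atTop.comp
      (tendsto_intCast_atTop_atTop.comp hMN))
  refine squeeze_zero_norm (a := fun j => |((N j - M j : ℤ) : ℝ)|⁻¹ * C) (fun j => ?_)
    (by simpa using hlen.mul_const C)
  rw [norm_mul, norm_inv, Complex.norm_real, Real.norm_eq_abs]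
  exact mul_le_mul_of_nonneg_left (hC _ _) (by positivity)

end Averages

/-- `e(nt + rn²)` -/
noncomputable def quadraticPhase (r : ℝ) (t : AddCircle (1 : ℝ)) (n : ℤ) : ℂ :=
  AddCircle.toCircle (n • t + ((r * (n : ℝ) ^ 2 : ℝ) : AddCircle (1 : ℝ)))

theorem norm_quadraticPhase (r : ℝ) (t : AddCircle (1 : ℝ)) (n : ℤ) :
    ‖quadraticPhase r t n‖ = 1 :=
  Circle.norm_coe _

theorem quadraticPhase_add_den (r : ℚ) (t : AddCircle (1 : ℝ)) (n : ℤ) :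
    quadraticPhase r t (n + r.den) = AddCircle.toCircle (r.den • t) * quadraticPhase r t n := by
  have hnum : (r : ℝ) * r.den = r.num := by exact_mod_cast Rat.mul_den_eq_num r
  have hphase : (r : ℝ) * ((n + r.den : ℤ) : ℝ) ^ 2 =
      (r : ℝ) * (n : ℝ) ^ 2 + (2 * n * r.num + r.den * r.num : ℤ) • (1 : ℝ) := by
    rw [zsmul_one]
    push_cast
    linear_combination (2 * (n : ℝ) + r.den) * hnum
  rw [quadraticPhase, quadraticPhase, ← Circle.coe_mul, ← AddCircle.toCircle_add, hphase,
    AddCircle.coe_add, AddCircle.coe_zsmul, AddCircle.coe_period, smul_zero, add_zero, add_zsmul,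
    natCast_zsmul]
  abel_nf

theorem exists_rat_eq_of_isOfFinAddOrder {t : AddCircle (1 : ℝ)} (ht : IsOfFinAddOrder t) :
    ∃ q : ℚ, t = ((q : ℝ) : AddCircle (1 : ℝ)) := by
  induction t using QuotientAddGroup.induction_on with
  | H a =>
    obtain ⟨q, hq⟩ := AddCircle.isOfFinAddOrder_iff_exists_rat_eq_div.1 ht
    exact ⟨q, by rw [hq, div_one]⟩

theorem toCircle_nsmul_ne_one {t : AddCircle (1 : ℝ)} (ht : ¬IsOfFinAddOrder t) {d : ℕ}
    (hd : d ≠ 0) : AddCircle.toCircle (d • t) ≠ 1 := by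
  rw [← AddCircle.toCircle_zero, (AddCircle.injective_toCircle one_ne_zero).ne_iff]
  exact fun h => ht (isOfFinAddOrder_iff_nsmul_eq_zero.2 ⟨d, Nat.pos_of_ne_zero hd, h⟩)

theorem ae_not_isOfFinAddOrder {σ : Measure (AddCircle (1 : ℝ))}
    (hσ : ∀ q : ℚ, σ {((q : ℝ) : AddCircle (1 : ℝ))} = 0) : ∀ᵐ t ∂σ, ¬IsOfFinAddOrder t := by
  filter_upwards [ae_all_iff.2 fun q => measure_eq_zero_iff_ae_notMem.1 (hσ q)] with t ht hfin
  obtain ⟨q, rfl⟩ := exists_rat_eq_of_isOfFinAddOrder hfin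
  exact ht q rfl

theorem tendsto_inv_mul_sum_quadraticPhase (r : ℚ) {t : AddCircle (1 : ℝ)}
    (ht : ¬IsOfFinAddOrder t) {M N : ℕ → ℤ} (hMN : Tendsto (fun j => N j - M j) atTop atTop) :
    Tendsto (fun j => (((N j - M j : ℤ) : ℝ) : ℂ)⁻¹ *
      ∑ n ∈ Ico (M j) (N j), quadraticPhase r t n) atTop (𝓝 0) :=
  tendsto_inv_mul_sum_Ico_of_norm_le
    (norm_sum_Ico_le_of_add_eq_mul (fun n => (norm_quadraticPhase r t n).le)
      (Circle.coe_eq_one.not.2 (toCircle_nsmul_ne_one ht r.den_nz))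
      (quadraticPhase_add_den r t)) hMN

/-- **Spectral estimate in the proof of Theorem A.3.** If `σ` is a finite positive Borel
measure on the circle `𝕋 = ℝ/ℤ` with no atoms at rational points, and `r ∈ ℚ`, then
`∫ |(1/(N-M)) Σ_{n=M}^{N-1} e(nt + rn²)|² dσ(t) → 0` along any sequence of intervals
whose lengths tend to infinity, where `e(s) = e^{2πis}`. -/
theorem quadratic_weyl_sums_spectral_vanishing
    (σ : Measure (AddCircle (1 : ℝ))) [IsFiniteMeasure σ]
    (hσ : ∀ q : ℚ, σ {(((q : ℝ)) : AddCircle (1 : ℝ))} = 0)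
    (r : ℚ)
    (M N : ℕ → ℤ) (hMN : Tendsto (fun j => N j - M j) atTop atTop) :
    Tendsto (fun j => ∫ t : AddCircle (1 : ℝ),
        ‖((((N j - M j : ℤ) : ℝ)) : ℂ)⁻¹ *
          ∑ n ∈ Finset.Ico (M j) (N j),
            (AddCircle.toCircle (n • t + (((r : ℝ) * (n : ℝ) ^ 2 : ℝ) : AddCircle (1 : ℝ))) : ℂ)‖ ^ 2
        ∂σ) atTop (𝓝 0) := by
  have hdom := tendsto_integral_of_dominated_convergence (μ := σ) (f := fun _ => 0)
    (F := fun j t => ‖(((N j - M j : ℤ) : ℝ) : ℂ)⁻¹ *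
      ∑ n ∈ Ico (M j) (N j), quadraticPhase r t n‖ ^ 2) (fun _ => 1)
    (fun j => (by unfold quadraticPhase; fun_prop : Continuous _).aestronglyMeasurable)
    (integrable_const 1)
    (fun j => ae_of_all _ fun t => by
      rw [norm_pow, norm_norm]
      exact pow_le_one₀ (norm_nonneg _)
        (norm_inv_mul_sum_Ico_le_one (fun n => (norm_quadraticPhase r t n).le) (M j) (N j)))
    ((ae_not_isOfFinAddOrder hσ).mono fun t ht => by
      simpa using (tendsto_inv_mul_sum_quadraticPhase r ht hMN).norm.pow 2)
  rwa [integral_zero] at hdom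
end

section
/- Let (𝒫, 𝒬) = ((p₁,q₁), …, (p_m,q_m)) be a nice ordered family of pairs of integer polynomials, containing no pair of constant polynomials, and suppose deg(p₁) ≥ 2. Then there exists a pair (p, q) ∈ (𝒫, 𝒬) such that for every sufficiently large h ∈ ℕ, the family (p,q,h)-vdC(𝒫,𝒬) is nice and has strictly smaller type than (𝒫, 𝒬). -/
/-!
Take `(p, q)` as follows: if some `pᵢ` is constant, such a pair with `deg qᵢ` least; otherwise
a pair with `deg pᵢ = e` least, not equivalent to `p₁` if possible, and `(p₁, q₁)` when every
`pᵢ` of degree `e` is equivalent to `p₁` (then all `pᵢ` are, and `e = deg p₁`).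

Subtracting a polynomial `p` of degree `e` from polynomials of degree `≥ e` (and from their
shifts, which lie in the same classes) leaves the classes of degree `> e` untouched, deletes the
class of `p` and translates the other classes of degree `e` injectively. So `w₁ₑ` drops while
the `w₁ⱼ`, `j > e`, do not change; in the first case the first row does not change at all, and
the same argument applied to `𝒬'` and `q` lowers `w₂` at `deg q`.

For niceness the only delicate comparison is `deg (S_h q₁ - qᵢ) < deg (S_h p₁ - pᵢ)` when
`pᵢ ∼ p₁`, `d = deg p₁`: then `deg (q₁ - qᵢ) ≤ d - 2` by niceness, while the coefficient of
`t^(d-1)` in `S_h p₁ - pᵢ` is `d a h + c` (`a` the leading coefficient of `p₁`), nonzero for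
all large `h`.
-/

open Polynomial

/-- An ordered family of pairs of integer polynomials, as a list of pairs. -/
abbrev PolyPairFamily := List (Polynomial ℤ × Polynomial ℤ)

/-- The shift `S_h p = p(t + h)`. -/
noncomputable def polyShift (h : ℕ) (p : Polynomial ℤ) : Polynomial ℤ :=
  p.comp (Polynomial.X + Polynomial.C (h : ℤ))

/-- A pair of polynomials is constant when both entries are constant
(the degree of a constant polynomial, including `0`, is `0`). -/
def IsConstPair (pq : Polynomial ℤ × Polynomial ℤ) : Prop :=
  pq.1.natDegree = 0 ∧ pq.2.natDegree = 0

/-- The degree of the family: the maximum of the degrees of all its polynomials. -/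
noncomputable def famDegree (F : PolyPairFamily) : ℕ :=
  (F.map fun pq => max pq.1.natDegree pq.2.natDegree).foldr max 0

/-- `w₁ⱼ`: the number of equivalence classes (same degree and leading coefficient) of
polynomials of degree `j` in `𝒫`. -/
noncomputable def w1 (F : PolyPairFamily) (j : ℕ) : ℕ :=
  (((F.filter fun pq => pq.1.natDegree == j).map fun pq => pq.1.leadingCoeff).dedup).length

/-- `w₂ⱼ`: the number of equivalence classes of polynomials of degree `j` in
`𝒬' = {qᵢ : pᵢ constant}`. -/
noncomputable def w2 (F : PolyPairFamily) (j : ℕ) : ℕ :=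
  (((F.filter fun pq => pq.1.natDegree == 0 && pq.2.natDegree == j).map
      fun pq => pq.2.leadingCoeff).dedup).length

/-- The type of the family relative to degree `d`, flattened to the list
`[w₁_d, …, w₁_1, w₂_d, …, w₂_1]`; types are compared lexicographically. -/
noncomputable def typeList (d : ℕ) (F : PolyPairFamily) : List ℕ :=
  ((List.range d).map fun k => w1 F (d - k)) ++ ((List.range d).map fun k => w2 F (d - k))

/-- A family `((p₁,q₁),…,(p_m,q_m))` is *nice* if (1) `deg p₁ ≥ deg pᵢ` for all `i`;
(2) `deg p₁ > deg qᵢ` for all `i`; (3) `deg (p₁ - pᵢ) > deg (q₁ - qᵢ)` for `i ≥ 2`. -/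
def NiceFamily (F : PolyPairFamily) : Prop :=
  ∃ p₁ q₁ rest, F = (p₁, q₁) :: rest ∧
    (∀ pq ∈ F, pq.1.natDegree ≤ p₁.natDegree) ∧
    (∀ pq ∈ F, pq.2.natDegree < p₁.natDegree) ∧
    (∀ pq ∈ rest, (q₁ - pq.2).natDegree < (p₁ - pq.1).natDegree)

/-- The van der Corput operation `(p,q,h)-vdC(𝒫,𝒬)`: form the shifted-and-translated
family and remove all pairs of constant polynomials. -/
noncomputable def vdcOp (p q : Polynomial ℤ) (h : ℕ) (F : PolyPairFamily) : PolyPairFamily :=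
  ((F.map fun pq => (polyShift h pq.1 - p, polyShift h pq.2 - q)) ++
      (F.map fun pq => (pq.1 - p, pq.2 - q))).filter
    fun pq => !(pq.1.natDegree == 0 && pq.2.natDegree == 0)

open Filter

namespace Polynomial

variable {R : Type*}

section Semiring

variable [Semiring R] {f : R[X]} {n : ℕ}

theorem coeff_taylor_of_natDegree_le (r : R) (h : f.natDegree ≤ n) :
    (taylor r f).coeff n = f.coeff n := by
  rcases h.lt_or_eq with h | rfl
  · rw [coeff_eq_zero_of_natDegree_lt h,
      coeff_eq_zero_of_natDegree_lt (by rwa [natDegree_taylor])]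
  · exact coeff_taylor_natDegree r f

theorem coeff_taylor_natDegree_sub_one (r : R) (f : R[X]) :
    (taylor r f).coeff (f.natDegree - 1) =
      f.coeff (f.natDegree - 1) + f.natDegree * f.leadingCoeff * r := by
  obtain hd | ⟨k, hk⟩ : f.natDegree = 0 ∨ ∃ k, f.natDegree = k + 1 :=
    (Nat.eq_zero_or_eq_succ_pred _).imp_right fun h => ⟨_, h⟩
  · rw [hd, taylor_coeff_zero, eq_C_of_natDegree_eq_zero hd, eval_C]
    simp
  · have hle : (hasseDeriv k f).natDegree < 2 := by
      have := natDegree_hasseDeriv_le f k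
      omega
    rw [hk, Nat.add_sub_cancel, taylor_coeff, eval_eq_sum_range' hle, Finset.sum_range_succ,
      Finset.sum_range_one, hasseDeriv_coeff, hasseDeriv_coeff, leadingCoeff, hk,
      zero_add, add_comm 1 k, Nat.choose_self, Nat.choose_succ_self_right]
    simp

/-- `u ∼ v` in the sense of the paper iff `degLC u = degLC v`. -/
def degLC (u : R[X]) : ℕ × R := (u.natDegree, u.leadingCoeff)

@[simp] theorem degLC_taylor (r : R) (u : R[X]) : degLC (taylor r u) = degLC u := by
  rw [degLC, degLC, natDegree_taylor, leadingCoeff_taylor]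

end Semiring

section Ring

variable [Ring R] {f g p q u : R[X]} {n : ℕ}

theorem natDegree_sub_le_pred_of_coeff_eq (hp : p.natDegree ≤ n) (hq : q.natDegree ≤ n)
    (h : p.coeff n = q.coeff n) : (p - q).natDegree ≤ n - 1 := by
  refine natDegree_le_iff_coeff_eq_zero.mpr fun N hN => ?_
  rcases (by omega : N = n ∨ n < N) with rfl | hlt
  · rw [coeff_sub, h, sub_self]
  · rw [coeff_sub, coeff_eq_zero_of_natDegree_lt (hp.trans_lt hlt),
      coeff_eq_zero_of_natDegree_lt (hq.trans_lt hlt), sub_self]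

theorem natDegree_sub_eq_of_coeff_ne (hp : p.natDegree ≤ n) (hq : q.natDegree ≤ n)
    (h : p.coeff n ≠ q.coeff n) : (p - q).natDegree = n :=
  natDegree_eq_of_le_of_coeff_ne_zero ((natDegree_sub_le _ _).trans (max_le hp hq))
    (by rwa [coeff_sub, sub_ne_zero])

theorem natDegree_taylor_sub_le (r : R) (hf : f.natDegree ≤ n + 1)
    (hfg : (f - g).natDegree ≤ n) : (taylor r f - g).natDegree ≤ n := by
  refine natDegree_le_iff_coeff_eq_zero.mpr fun N hN => ?_
  rw [coeff_sub, coeff_taylor_of_natDegree_le r (by omega), ← coeff_sub]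
  exact coeff_eq_zero_of_natDegree_lt (by omega)

theorem degLC_sub_eq_iff_of_natDegree_lt {j : ℕ} {c : R} (hj : p.natDegree < j) :
    degLC (u - p) = (j, c) ↔ degLC u = (j, c) := by
  simp only [degLC, Prod.mk.injEq]
  rcases lt_or_ge p.natDegree u.natDegree with hpu | hup
  · rw [natDegree_sub_eq_left_of_natDegree_lt hpu,
      leadingCoeff_sub_of_degree_lt (degree_lt_degree hpu)]
  · have := (natDegree_sub_le u p).trans (max_le hup le_rfl)
    constructor <;> rintro ⟨rfl, -⟩ <;> omega

theorem degLC_sub_eq_iff_of_natDegree_eq {c : R} (hp : 0 < p.natDegree)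
    (hu : p.natDegree ≤ u.natDegree) :
    degLC (u - p) = (p.natDegree, c) ↔
      ∃ b ≠ p.leadingCoeff, degLC u = (p.natDegree, b) ∧ b - p.leadingCoeff = c := by
  simp only [degLC, Prod.mk.injEq]
  rcases hu.lt_or_eq with hpu | hpu
  · rw [natDegree_sub_eq_left_of_natDegree_lt hpu]
    simp [hpu.ne']
  have hcoeff : u.coeff p.natDegree = u.leadingCoeff := by rw [hpu]; rfl
  by_cases hlc : u.leadingCoeff = p.leadingCoeff
  · have : (u - p).natDegree ≤ p.natDegree - 1 :=
      natDegree_sub_le_pred_of_coeff_eq hpu.ge le_rfl (hcoeff.trans hlc)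
    constructor
    · rintro ⟨h, -⟩
      omega
    · rintro ⟨b, hb, ⟨-, rfl⟩, -⟩
      exact absurd hlc hb
  · have hdeg := natDegree_sub_eq_of_coeff_ne hpu.ge le_rfl (hcoeff.trans_ne hlc)
    rw [leadingCoeff, hdeg, coeff_sub, hcoeff, ← hpu]
    exact ⟨fun ⟨_, hc⟩ => ⟨_, hlc, ⟨rfl, rfl⟩, hc⟩, fun ⟨_, _, ⟨_, hb⟩, hc⟩ => ⟨rfl, hb ▸ hc⟩⟩

end Ring

theorem eventually_mul_natCast_add_ne_zero [Ring R] [NoZeroDivisors R] [CharZero R] {a : R}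
    (ha : a ≠ 0) (c : R) : ∀ᶠ n : ℕ in atTop, a * n + c ≠ 0 := by
  rw [← Nat.cofinite_eq_atTop]
  refine Set.Finite.eventually_cofinite_notMem (s := {n : ℕ | a * n + c = 0})
    (Set.Subsingleton.finite fun m hm n hn => ?_)
  exact Nat.cast_injective (mul_left_cancel₀ ha (add_right_cancel (hm.trans hn.symm)))

theorem eventually_natDegree_taylor_sub [CommRing R] [IsDomain R] [CharZero R] {f u : R[X]}
    (hf : 0 < f.natDegree) (hu : u.natDegree ≤ f.natDegree)
    (hc : u.coeff f.natDegree = f.leadingCoeff) :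
    ∀ᶠ h : ℕ in atTop, (taylor (h : R) f - u).natDegree = f.natDegree - 1 := by
  have ha : (f.natDegree : R) * f.leadingCoeff ≠ 0 :=
    mul_ne_zero (Nat.cast_ne_zero.mpr hf.ne')
      (leadingCoeff_ne_zero.mpr (ne_zero_of_natDegree_gt hf))
  filter_upwards [eventually_mul_natCast_add_ne_zero ha ((f - u).coeff (f.natDegree - 1))]
    with h hh
  refine natDegree_eq_of_le_of_coeff_ne_zero (natDegree_sub_le_pred_of_coeff_eq
    (natDegree_taylor _ _).le hu (by rw [coeff_taylor_natDegree, hc])) ?_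
  rw [coeff_sub, coeff_taylor_natDegree_sub_one]
  convert hh using 1
  rw [coeff_sub]
  ring

end Polynomial

section Classes

variable {R : Type*} [Ring R] [DecidableEq R] {p : R[X]} {L : List R[X]} {j : ℕ}

noncomputable def lcsOfDegree (L : List R[X]) (j : ℕ) : Finset R :=
  ((L.filter fun u => u.natDegree = j).map leadingCoeff).toFinset

theorem mem_lcsOfDegree {c : R} : c ∈ lcsOfDegree L j ↔ ∃ u ∈ L, degLC u = (j, c) := by
  simp [lcsOfDegree, degLC, and_assoc]

noncomputable def vdcList (p : R[X]) (r : R) (L : List R[X]) : List R[X] :=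
  L.map (fun u => taylor r u - p) ++ L.map (· - p)

theorem lcsOfDegree_congr {L' : List R[X]} (hj : 0 < j)
    (h : ∀ u : R[X], 0 < u.natDegree → (u ∈ L ↔ u ∈ L')) :
    lcsOfDegree L j = lcsOfDegree L' j := by
  ext c
  simp only [mem_lcsOfDegree]
  refine exists_congr fun u => and_congr_left fun hu => h u ?_
  rw [degLC, Prod.mk.injEq] at hu
  omega

theorem mem_lcsOfDegree_vdcList {r c : R} :
    c ∈ lcsOfDegree (vdcList p r L) j ↔
      ∃ u ∈ L, degLC (taylor r u - p) = (j, c) ∨ degLC (u - p) = (j, c) := by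
  simp only [mem_lcsOfDegree, vdcList, List.mem_append, List.mem_map]
  constructor
  · rintro ⟨_, ⟨u, hu, rfl⟩ | ⟨u, hu, rfl⟩, h⟩
    exacts [⟨u, hu, .inl h⟩, ⟨u, hu, .inr h⟩]
  · rintro ⟨u, hu, h | h⟩
    exacts [⟨_, .inl ⟨u, hu, rfl⟩, h⟩, ⟨_, .inr ⟨u, hu, rfl⟩, h⟩]

theorem lcsOfDegree_vdcList_of_lt (r : R) (hj : p.natDegree < j) :
    lcsOfDegree (vdcList p r L) j = lcsOfDegree L j := by
  ext c
  rw [mem_lcsOfDegree_vdcList, mem_lcsOfDegree]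
  simp [degLC_sub_eq_iff_of_natDegree_lt hj]

theorem lcsOfDegree_vdcList_self (r : R) (hp : 0 < p.natDegree)
    (hL : ∀ u ∈ L, p.natDegree ≤ u.natDegree) :
    lcsOfDegree (vdcList p r L) p.natDegree =
      ((lcsOfDegree L p.natDegree).erase p.leadingCoeff).image (· - p.leadingCoeff) := by
  ext c
  have hsub : ∀ u ∈ L, ∀ v : R[X], degLC v = degLC u →
      (degLC (v - p) = (p.natDegree, c) ↔
        ∃ b ≠ p.leadingCoeff, degLC u = (p.natDegree, b) ∧ b - p.leadingCoeff = c) := by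
    intro u hu v hv
    rw [degLC_sub_eq_iff_of_natDegree_eq hp ((hL u hu).trans_eq (congrArg Prod.fst hv).symm),
      hv]
  rw [mem_lcsOfDegree_vdcList]
  simp only [Finset.mem_image, Finset.mem_erase, mem_lcsOfDegree]
  constructor
  · rintro ⟨u, hu, h | h⟩
    · obtain ⟨b, hb, hub, rfl⟩ := (hsub u hu _ (degLC_taylor r u)).mp h
      exact ⟨b, ⟨hb, u, hu, hub⟩, rfl⟩
    · obtain ⟨b, hb, hub, rfl⟩ := (hsub u hu u rfl).mp h
      exact ⟨b, ⟨hb, u, hu, hub⟩, rfl⟩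
  · rintro ⟨b, ⟨hb, u, hu, hub⟩, rfl⟩
    exact ⟨u, hu, Or.inr ((hsub u hu u rfl).mpr ⟨b, hb, hub, rfl⟩)⟩

theorem card_lcsOfDegree_vdcList_lt (r : R) (hpL : p ∈ L) (hp : 0 < p.natDegree)
    (hL : ∀ u ∈ L, p.natDegree ≤ u.natDegree) :
    (lcsOfDegree (vdcList p r L) p.natDegree).card < (lcsOfDegree L p.natDegree).card := by
  rw [lcsOfDegree_vdcList_self r hp hL, Finset.card_image_of_injective _ sub_left_injective]
  exact Finset.card_erase_lt_of_mem (mem_lcsOfDegree.mpr ⟨p, hpL, rfl⟩)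

end Classes

theorem polyShift_eq_taylor (h : ℕ) (p : ℤ[X]) : polyShift h p = taylor (h : ℤ) p :=
  (taylor_apply _ _).symm

/-- The paper's `𝒬'`. -/
noncomputable def sndOfConstFst (F : PolyPairFamily) : List ℤ[X] :=
  (F.filter fun pq => pq.1.natDegree = 0).map Prod.snd

theorem w1_eq_card (F : PolyPairFamily) (j : ℕ) :
    w1 F j = (lcsOfDegree (F.map Prod.fst) j).card := by
  rw [w1, ← List.card_toFinset]
  congr 1
  ext c
  simp [mem_lcsOfDegree, degLC, and_assoc]

theorem w2_eq_card (F : PolyPairFamily) (j : ℕ) :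
    w2 F j = (lcsOfDegree (sndOfConstFst F) j).card := by
  rw [w2, ← List.card_toFinset]
  congr 1
  ext c
  simp only [List.mem_toFinset, List.mem_map, List.mem_filter, mem_lcsOfDegree, sndOfConstFst,
    degLC]
  grind

section VdcOp

variable {p q : ℤ[X]} {h : ℕ} {F : PolyPairFamily}

theorem mem_vdcOp {x : ℤ[X] × ℤ[X]} :
    x ∈ vdcOp p q h F ↔ ¬ IsConstPair x ∧ ∃ pq ∈ F,
      x = (taylor (h : ℤ) pq.1 - p, taylor (h : ℤ) pq.2 - q) ∨ x = (pq.1 - p, pq.2 - q) := by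
  simp only [vdcOp, polyShift_eq_taylor, List.mem_filter, List.mem_append, List.mem_map,
    IsConstPair, Bool.not_eq_true', Bool.and_eq_false_iff, beq_eq_false_iff_ne, ne_eq,
    not_and_or]
  grind

theorem lcsOfDegree_fst_vdcOp {j : ℕ} (hj : 0 < j) :
    lcsOfDegree ((vdcOp p q h F).map Prod.fst) j =
      lcsOfDegree (vdcList p h (F.map Prod.fst)) j := by
  refine lcsOfDegree_congr hj fun u hu => ?_
  simp only [List.mem_map, mem_vdcOp, IsConstPair, vdcList, List.mem_append]
  constructor
  · rintro ⟨x, ⟨-, pq, hpq, rfl | rfl⟩, rfl⟩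
    exacts [.inl ⟨_, ⟨pq, hpq, rfl⟩, rfl⟩, .inr ⟨_, ⟨pq, hpq, rfl⟩, rfl⟩]
  · rintro (⟨_, ⟨pq, hpq, rfl⟩, rfl⟩ | ⟨_, ⟨pq, hpq, rfl⟩, rfl⟩)
    exacts [⟨_, ⟨fun h0 => hu.ne' h0.1, pq, hpq, .inl rfl⟩, rfl⟩,
      ⟨_, ⟨fun h0 => hu.ne' h0.1, pq, hpq, .inr rfl⟩, rfl⟩]

theorem lcsOfDegree_sndOfConstFst_vdcOp (hp : p.natDegree = 0) {j : ℕ} (hj : 0 < j) :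
    lcsOfDegree (sndOfConstFst (vdcOp p q h F)) j =
      lcsOfDegree (vdcList q h (sndOfConstFst F)) j := by
  have hsub : ∀ v : ℤ[X], (v - p).natDegree = v.natDegree := fun v => by
    rw [eq_C_of_natDegree_eq_zero hp, natDegree_sub_C]
  refine lcsOfDegree_congr hj fun u hu => ?_
  simp only [sndOfConstFst, List.mem_map, List.mem_filter, decide_eq_true_eq, mem_vdcOp,
    IsConstPair, vdcList, List.mem_append, List.map_map, Function.comp_def]
  constructor
  · rintro ⟨x, ⟨⟨-, pq, hpq, rfl | rfl⟩, h0⟩, rfl⟩ <;>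
      simp only [hsub, natDegree_taylor] at h0
    exacts [.inl ⟨pq, ⟨hpq, h0⟩, rfl⟩, .inr ⟨pq, ⟨hpq, h0⟩, rfl⟩]
  · rintro (⟨pq, ⟨hpq, h0⟩, rfl⟩ | ⟨pq, ⟨hpq, h0⟩, rfl⟩)
    · exact ⟨_, ⟨⟨fun hc => hu.ne' hc.2, pq, hpq, .inl rfl⟩, by simp [hsub, h0]⟩, rfl⟩
    · exact ⟨_, ⟨⟨fun hc => hu.ne' hc.2, pq, hpq, .inr rfl⟩, by simp [hsub, h0]⟩, rfl⟩

theorem w1_vdcOp_of_lt {j : ℕ} (hj : p.natDegree < j) : w1 (vdcOp p q h F) j = w1 F j := by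
  rw [w1_eq_card, w1_eq_card, lcsOfDegree_fst_vdcOp (by omega), lcsOfDegree_vdcList_of_lt _ hj]

theorem w1_vdcOp_lt {pq : ℤ[X] × ℤ[X]} (hpq : pq ∈ F) (hp : 0 < pq.1.natDegree)
    (hmin : ∀ pq' ∈ F, pq.1.natDegree ≤ pq'.1.natDegree) :
    w1 (vdcOp pq.1 pq.2 h F) pq.1.natDegree < w1 F pq.1.natDegree := by
  rw [w1_eq_card, w1_eq_card, lcsOfDegree_fst_vdcOp hp]
  exact card_lcsOfDegree_vdcList_lt _ (List.mem_map_of_mem hpq) hp (by simpa using hmin)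

theorem w2_vdcOp_of_lt (hp : p.natDegree = 0) {j : ℕ} (hj : q.natDegree < j) :
    w2 (vdcOp p q h F) j = w2 F j := by
  rw [w2_eq_card, w2_eq_card, lcsOfDegree_sndOfConstFst_vdcOp hp (by omega),
    lcsOfDegree_vdcList_of_lt _ hj]

theorem w2_vdcOp_lt {pq : ℤ[X] × ℤ[X]} (hpq : pq ∈ F) (hp : pq.1.natDegree = 0)
    (hq : 0 < pq.2.natDegree)
    (hmin : ∀ pq' ∈ F, pq'.1.natDegree = 0 → pq.2.natDegree ≤ pq'.2.natDegree) :
    w2 (vdcOp pq.1 pq.2 h F) pq.2.natDegree < w2 F pq.2.natDegree := by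
  rw [w2_eq_card, w2_eq_card, lcsOfDegree_sndOfConstFst_vdcOp hp hq]
  refine card_lcsOfDegree_vdcList_lt _ ?_ hq ?_
  · exact List.mem_map_of_mem (List.mem_filter.mpr ⟨hpq, by simpa using hp⟩)
  · simpa [sndOfConstFst] using fun u x hx h0 => hmin (x, u) hx h0

end VdcOp

theorem List.lex_lt_map_range {α : Type*} [LT α] {f g : ℕ → α} {n k : ℕ} (hk : k < n)
    (heq : ∀ i < k, f i = g i) (hlt : f k < g k) :
    List.Lex (· < ·) ((List.range n).map f) ((List.range n).map g) :=
  List.lt_iff_exists.mpr <| .inr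
    ⟨k, by simpa, by simpa, fun i hi => by simpa using heq i hi, by simpa using hlt⟩

section TypeList

variable {d : ℕ} {F G : PolyPairFamily}

theorem typeList_eq_map_range (d : ℕ) (F : PolyPairFamily) :
    typeList d F = (List.range (d + d)).map
      fun i => if i < d then w1 F (d - i) else w2 F (d + d - i) := by
  rw [typeList, List.range_add, List.map_append, List.map_map]
  congr 1
  · exact List.map_congr_left fun i hi => by simp [List.mem_range.mp hi]
  · refine List.map_congr_left fun i _ => ?_
    simp only [Function.comp_apply, add_lt_iff_neg_left, Nat.not_lt_zero, if_false]
    congr 1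
    omega

theorem typeList_lex_of_w1_lt {e : ℕ} (he : 0 < e) (hed : e ≤ d)
    (heq : ∀ j, e < j → w1 G j = w1 F j) (hlt : w1 G e < w1 F e) :
    List.Lex (· < ·) (typeList d G) (typeList d F) := by
  rw [typeList_eq_map_range, typeList_eq_map_range]
  refine List.lex_lt_map_range (k := d - e) (by omega) (fun i hi => ?_) ?_
  · simpa [show i < d by omega] using heq _ (by omega)
  · simpa [show d - e < d by omega, show d - (d - e) = e by omega] using hlt

theorem typeList_lex_of_w2_lt {f : ℕ} (hf : 0 < f) (hfd : f ≤ d)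
    (hw1 : ∀ j, 0 < j → w1 G j = w1 F j) (heq : ∀ j, f < j → w2 G j = w2 F j)
    (hlt : w2 G f < w2 F f) :
    List.Lex (· < ·) (typeList d G) (typeList d F) := by
  rw [typeList_eq_map_range, typeList_eq_map_range]
  refine List.lex_lt_map_range (k := d + d - f) (by omega) (fun i hi => ?_) ?_
  · split_ifs
    exacts [hw1 _ (by omega), heq _ (by omega)]
  · simpa [show ¬ d + d - f < d by omega, show d + d - (d + d - f) = f by omega] using hlt

end TypeList

def VdcReduces (d : ℕ) (F : PolyPairFamily) (pq : ℤ[X] × ℤ[X]) : Prop :=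
  ∀ᶠ h : ℕ in atTop, NiceFamily (vdcOp pq.1 pq.2 h F) ∧
    List.Lex (· < ·) (typeList d (vdcOp pq.1 pq.2 h F)) (typeList d F)

section Nice

variable {p₁ q₁ : ℤ[X]} {rest : PolyPairFamily}

theorem niceFamily_cons_iff :
    NiceFamily ((p₁, q₁) :: rest) ↔
      (∀ pq ∈ (p₁, q₁) :: rest, pq.1.natDegree ≤ p₁.natDegree) ∧
      (∀ pq ∈ (p₁, q₁) :: rest, pq.2.natDegree < p₁.natDegree) ∧
      (∀ pq ∈ rest, (q₁ - pq.2).natDegree < (p₁ - pq.1).natDegree) := by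
  constructor
  · rintro ⟨_, _, _, hF, hnice⟩
    obtain ⟨⟨rfl, rfl⟩, rfl⟩ := List.cons_eq_cons.mp hF
    exact hnice
  · exact fun hnice => ⟨p₁, q₁, rest, rfl, hnice⟩

theorem niceFamily_vdcOp {p q : ℤ[X]} {h δ : ℕ}
    (h3 : ∀ pq ∈ rest, (q₁ - pq.2).natDegree < (p₁ - pq.1).natDegree)
    (hP : (taylor (h : ℤ) p₁ - p).natDegree = δ) (hδ : 0 < δ)
    (hbound : ∀ pq ∈ (p₁, q₁) :: rest,
      (taylor (h : ℤ) pq.1 - p).natDegree ≤ δ ∧ (pq.1 - p).natDegree ≤ δ ∧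
        (taylor (h : ℤ) pq.2 - q).natDegree < δ ∧ (pq.2 - q).natDegree < δ)
    (hdiff : ∀ pq ∈ (p₁, q₁) :: rest,
      (taylor (h : ℤ) q₁ - pq.2).natDegree < (taylor (h : ℤ) p₁ - pq.1).natDegree) :
    NiceFamily (vdcOp p q h ((p₁, q₁) :: rest)) := by
  set rest' := ((rest.map fun pq => (polyShift h pq.1 - p, polyShift h pq.2 - q)) ++
      ((p₁, q₁) :: rest).map fun pq => (pq.1 - p, pq.2 - q)).filter
    fun pq => !(pq.1.natDegree == 0 && pq.2.natDegree == 0)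
  have hF : vdcOp p q h ((p₁, q₁) :: rest) =
      (taylor (h : ℤ) p₁ - p, taylor (h : ℤ) q₁ - q) :: rest' := by
    simp [vdcOp, rest', polyShift_eq_taylor, hP, hδ.ne']
  refine ⟨_, _, rest', hF, fun x hx => ?_, fun x hx => ?_, fun x hx => ?_⟩
  · obtain ⟨-, pq, hpq, rfl | rfl⟩ := mem_vdcOp.mp hx
    exacts [hP ▸ (hbound pq hpq).1, hP ▸ (hbound pq hpq).2.1]
  · obtain ⟨-, pq, hpq, rfl | rfl⟩ := mem_vdcOp.mp hx
    exacts [hP ▸ (hbound pq hpq).2.2.1, hP ▸ (hbound pq hpq).2.2.2]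
  · simp only [rest', List.mem_filter, List.mem_append, List.mem_map] at hx
    obtain ⟨⟨pq, hpq, rfl⟩ | ⟨pq, hpq, rfl⟩, -⟩ := hx
    · simp only [polyShift_eq_taylor, sub_sub_sub_cancel_right, ← map_sub, natDegree_taylor]
      exact h3 pq hpq
    · simp only [sub_sub_sub_cancel_right]
      exact hdiff pq hpq

theorem NiceFamily.natDegree_sub_snd_le (hnice : NiceFamily ((p₁, q₁) :: rest))
    {pq : ℤ[X] × ℤ[X]} (hpq : pq ∈ (p₁, q₁) :: rest)
    (hc : pq.1.coeff p₁.natDegree = p₁.leadingCoeff) :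
    (q₁ - pq.2).natDegree ≤ p₁.natDegree - 2 := by
  obtain ⟨h1, -, h3⟩ := niceFamily_cons_iff.mp hnice
  rcases List.mem_cons.mp hpq with rfl | hrest
  · simp
  · have := natDegree_sub_le_pred_of_coeff_eq le_rfl (h1 pq hpq) hc.symm
    have := h3 pq hrest
    omega

theorem NiceFamily.eventually_natDegree_taylor_sub_lt (hnice : NiceFamily ((p₁, q₁) :: rest))
    (hd : 2 ≤ p₁.natDegree) :
    ∀ᶠ h : ℕ in atTop, ∀ pq ∈ (p₁, q₁) :: rest,
      (taylor (h : ℤ) q₁ - pq.2).natDegree < (taylor (h : ℤ) p₁ - pq.1).natDegree := by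
  obtain ⟨h1, h2, -⟩ := niceFamily_cons_iff.mp hnice
  have hq₁ : q₁.natDegree < p₁.natDegree := h2 _ List.mem_cons_self
  refine (eventually_all_finite (List.finite_toSet _)).mpr fun pq hpq => ?_
  by_cases hc : pq.1.coeff p₁.natDegree = p₁.leadingCoeff
  · filter_upwards [eventually_natDegree_taylor_sub (by omega) (h1 pq hpq) hc] with h hh
    have := natDegree_taylor_sub_le (h : ℤ) (n := p₁.natDegree - 2) (by omega)
      (hnice.natDegree_sub_snd_le hpq hc)
    omega
  · refine Eventually.of_forall fun h => ?_
    rw [natDegree_sub_eq_of_coeff_ne (natDegree_taylor _ _).le (h1 pq hpq)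
      (by rwa [coeff_taylor_natDegree, ne_comm])]
    exact (natDegree_sub_le _ _).trans_lt
      (max_lt (by rwa [natDegree_taylor]) (h2 pq hpq))

theorem NiceFamily.eventually_niceFamily_vdcOp (hnice : NiceFamily ((p₁, q₁) :: rest))
    (hd : 2 ≤ p₁.natDegree) {pq : ℤ[X] × ℤ[X]} (hpq : pq ∈ (p₁, q₁) :: rest)
    (hc : pq.1.coeff p₁.natDegree ≠ p₁.leadingCoeff) :
    ∀ᶠ h : ℕ in atTop, NiceFamily (vdcOp pq.1 pq.2 h ((p₁, q₁) :: rest)) := by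
  obtain ⟨h1, h2, h3⟩ := niceFamily_cons_iff.mp hnice
  filter_upwards [hnice.eventually_natDegree_taylor_sub_lt hd] with h hdiff
  have hP : (taylor (h : ℤ) p₁ - pq.1).natDegree = p₁.natDegree :=
    natDegree_sub_eq_of_coeff_ne (natDegree_taylor _ _).le (h1 pq hpq)
      (by rwa [coeff_taylor_natDegree, ne_comm])
  refine niceFamily_vdcOp h3 hP (by omega) (fun pq' hpq' => ?_) hdiff
  exact ⟨(natDegree_sub_le _ _).trans
      (max_le ((natDegree_taylor _ _).trans_le (h1 pq' hpq')) (h1 pq hpq)),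
    (natDegree_sub_le _ _).trans (max_le (h1 pq' hpq') (h1 pq hpq)),
    (natDegree_sub_le _ _).trans_lt
      (max_lt ((natDegree_taylor _ _).trans_lt (h2 pq' hpq')) (h2 pq hpq)),
    (natDegree_sub_le _ _).trans_lt (max_lt (h2 pq' hpq') (h2 pq hpq))⟩

theorem NiceFamily.eventually_niceFamily_vdcOp_head (hnice : NiceFamily ((p₁, q₁) :: rest))
    (hd : 2 ≤ p₁.natDegree)
    (hall : ∀ pq ∈ (p₁, q₁) :: rest, pq.1.coeff p₁.natDegree = p₁.leadingCoeff) :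
    ∀ᶠ h : ℕ in atTop, NiceFamily (vdcOp p₁ q₁ h ((p₁, q₁) :: rest)) := by
  obtain ⟨h1, h2, h3⟩ := niceFamily_cons_iff.mp hnice
  filter_upwards [hnice.eventually_natDegree_taylor_sub_lt hd,
    eventually_natDegree_taylor_sub (f := p₁) (by omega) le_rfl rfl] with h hdiff hP
  refine niceFamily_vdcOp h3 hP (by omega) (fun pq hpq => ?_) hdiff
  have hp : (pq.1 - p₁).natDegree ≤ p₁.natDegree - 1 :=
    natDegree_sub_le_pred_of_coeff_eq (h1 pq hpq) le_rfl (hall pq hpq)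
  have hq : (pq.2 - q₁).natDegree ≤ p₁.natDegree - 2 :=
    natDegree_sub.trans_le (hnice.natDegree_sub_snd_le hpq (hall pq hpq))
  have hq' := natDegree_taylor_sub_le (h : ℤ) (n := p₁.natDegree - 2)
    (by have := h2 pq hpq; omega) hq
  exact ⟨natDegree_taylor_sub_le _ (by have := h1 pq hpq; omega) hp, hp, by omega, by omega⟩

theorem NiceFamily.famDegree_eq (hnice : NiceFamily ((p₁, q₁) :: rest)) :
    famDegree ((p₁, q₁) :: rest) = p₁.natDegree := by
  obtain ⟨h1, h2, -⟩ := niceFamily_cons_iff.mp hnice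
  refine le_antisymm (List.max_le_of_forall_le _ _ ?_)
    (List.le_max_of_le (List.mem_map_of_mem List.mem_cons_self) (le_max_left _ _))
  simp only [List.mem_map]
  rintro _ ⟨pq, hpq, rfl⟩
  exact max_le (h1 pq hpq) (h2 pq hpq).le

theorem NiceFamily.exists_vdcReduces_of_const (hnice : NiceFamily ((p₁, q₁) :: rest))
    (hd : 2 ≤ p₁.natDegree) (hnoconst : ∀ pq ∈ (p₁, q₁) :: rest, ¬ IsConstPair pq)
    (hconst : ∃ pq ∈ (p₁, q₁) :: rest, pq.1.natDegree = 0) :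
    ∃ pq ∈ (p₁, q₁) :: rest, VdcReduces p₁.natDegree ((p₁, q₁) :: rest) pq := by
  obtain ⟨-, h2, -⟩ := niceFamily_cons_iff.mp hnice
  obtain ⟨pq, ⟨hpq, hp⟩, hmin⟩ := Set.exists_min_image
    {pq | pq ∈ (p₁, q₁) :: rest ∧ pq.1.natDegree = 0} (·.2.natDegree)
    ((List.finite_toSet _).subset fun _ h => h.1) hconst
  have hq : 0 < pq.2.natDegree := Nat.pos_of_ne_zero fun h0 => hnoconst pq hpq ⟨hp, h0⟩
  have hc : pq.1.coeff p₁.natDegree ≠ p₁.leadingCoeff := by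
    rw [coeff_eq_zero_of_natDegree_lt (by omega), ne_comm, leadingCoeff_ne_zero]
    exact ne_zero_of_natDegree_gt hd
  refine ⟨pq, hpq, (hnice.eventually_niceFamily_vdcOp hd hpq hc).mono fun h hh => ⟨hh, ?_⟩⟩
  exact typeList_lex_of_w2_lt hq (h2 pq hpq).le (fun _ hj => w1_vdcOp_of_lt (hp ▸ hj))
    (fun _ hj => w2_vdcOp_of_lt hp hj)
    (w2_vdcOp_lt hpq hp hq fun pq' hpq' h0 => hmin pq' ⟨hpq', h0⟩)

theorem NiceFamily.exists_vdcReduces_of_nonconst (hnice : NiceFamily ((p₁, q₁) :: rest))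
    (hd : 2 ≤ p₁.natDegree) (hnonconst : ∀ pq ∈ (p₁, q₁) :: rest, pq.1.natDegree ≠ 0) :
    ∃ pq ∈ (p₁, q₁) :: rest, VdcReduces p₁.natDegree ((p₁, q₁) :: rest) pq := by
  obtain ⟨h1, -, -⟩ := niceFamily_cons_iff.mp hnice
  obtain ⟨pq₀, hpq₀, hmin⟩ := Set.exists_min_image {pq | pq ∈ (p₁, q₁) :: rest}
    (·.1.natDegree) (List.finite_toSet _) ⟨_, List.mem_cons_self⟩
  have hlex : ∀ pq ∈ (p₁, q₁) :: rest, pq.1.natDegree = pq₀.1.natDegree → ∀ h : ℕ,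
      List.Lex (· < ·) (typeList p₁.natDegree (vdcOp pq.1 pq.2 h ((p₁, q₁) :: rest)))
        (typeList p₁.natDegree ((p₁, q₁) :: rest)) := fun pq hpq he h =>
    typeList_lex_of_w1_lt (Nat.pos_of_ne_zero (hnonconst pq hpq)) (h1 pq hpq)
      (fun _ hj => w1_vdcOp_of_lt hj)
      (w1_vdcOp_lt hpq (Nat.pos_of_ne_zero (hnonconst pq hpq)) fun pq' hpq' => he ▸ hmin pq' hpq')
  by_cases hsim : ∃ pq ∈ (p₁, q₁) :: rest,
      pq.1.natDegree = pq₀.1.natDegree ∧ pq.1.coeff p₁.natDegree ≠ p₁.leadingCoeff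
  · obtain ⟨pq, hpq, he, hc⟩ := hsim
    exact ⟨pq, hpq, (hnice.eventually_niceFamily_vdcOp hd hpq hc).mono fun h hh =>
      ⟨hh, hlex pq hpq he h⟩⟩
  · push Not at hsim
    -- a pair of minimal degree is `∼ p₁`, so every `pᵢ` has degree `deg p₁` and is `∼ p₁`
    have he : pq₀.1.natDegree = p₁.natDegree := by
      refine le_antisymm (h1 pq₀ hpq₀) (le_natDegree_of_ne_zero ?_)
      rw [hsim pq₀ hpq₀ rfl, leadingCoeff_ne_zero]
      exact ne_zero_of_natDegree_gt hd
    have hall : ∀ pq ∈ (p₁, q₁) :: rest, pq.1.coeff p₁.natDegree = p₁.leadingCoeff :=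
      fun pq hpq => hsim pq hpq (le_antisymm (he ▸ h1 pq hpq) (hmin pq hpq))
    exact ⟨(p₁, q₁), List.mem_cons_self, (hnice.eventually_niceFamily_vdcOp_head hd hall).mono
      fun h hh => ⟨hh, hlex _ List.mem_cons_self he.symm h⟩⟩

end Nice

/-- **Lemma 4.4.** For a nice family of pairs of polynomials with `deg p₁ ≥ 2`, there is
a pair `(p,q)` in the family such that for all sufficiently large `h`, the family
`(p,q,h)-vdC(𝒫,𝒬)` is nice and has strictly smaller type. -/
theorem nice_family_vdc_reduction (F : PolyPairFamily)
    (hnoconst : ∀ pq ∈ F, ¬ IsConstPair pq)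
    (hnice : NiceFamily F)
    (hdeg : 2 ≤ F.headI.1.natDegree) :
    ∃ pq ∈ F, ∃ h₀ : ℕ, ∀ h : ℕ, h₀ ≤ h →
      NiceFamily (vdcOp pq.1 pq.2 h F) ∧
      List.Lex (· < ·) (typeList (famDegree F) (vdcOp pq.1 pq.2 h F))
        (typeList (famDegree F) F) := by
  obtain ⟨p₁, q₁, rest, rfl, -⟩ := id hnice
  obtain ⟨pq, hpq, hred⟩ :
      ∃ pq ∈ (p₁, q₁) :: rest, VdcReduces p₁.natDegree ((p₁, q₁) :: rest) pq := by
    by_cases hconst : ∃ pq ∈ (p₁, q₁) :: rest, pq.1.natDegree = 0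
    · exact hnice.exists_vdcReduces_of_const hdeg hnoconst hconst
    · exact hnice.exists_vdcReduces_of_nonconst hdeg fun pq hpq h0 => hconst ⟨pq, hpq, h0⟩
  rw [hnice.famDegree_eq]
  exact ⟨pq, hpq, eventually_atTop.mp hred⟩
end
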